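/- arXiv:1810.08763 — 8 statements merged into one kernel-verified Lean document; each statement's English description precedes it below -/
import Mathlib

section
/- If a subset A of the tree ω^{<ω} (finite sequences of naturals, ordered by end-extension) contains no infinite antichain, then A can be covered by finitely many chains. -/
/-!
Suppose `A` is not a finite union of chains. Then `A` is not a chain, so it has two incomparable
elements `a` and `b`. Split `A` into the elements below `a` (a chain, since we are in a tree), those
above `a`, and those incomparable to `a`. One of the last two parts is not a finite union of chains
either; every element above `a` is incomparable to `b`. So `A` contains an element `a₀` and a
subset `A₁`, again not a finite union of chains, all of whose elements are incomparable to `a₀`.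
Iterating produces an infinite antichain `a₀, a₁, …` in `A`.
-/

/-- Comparability in the tree `ω^{<ω}` ordered by end-extension. -/
def Compar (s t : List ℕ) : Prop := s <+: t ∨ t <+: s

variable {α : Type*} {r : α → α → Prop} {S T : Set α}

def ChainCoverable (r : α → α → Prop) (S : Set α) : Prop :=
  ∃ C : Set (Set α), C.Finite ∧ (∀ c ∈ C, IsChain r c) ∧ S ⊆ ⋃₀ C

namespace ChainCoverable

theorem mono (hT : ChainCoverable r T) (hST : S ⊆ T) : ChainCoverable r S :=
  let ⟨C, hC, hCr, hTC⟩ := hT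
  ⟨C, hC, hCr, hST.trans hTC⟩

theorem union (hS : ChainCoverable r S) (hT : ChainCoverable r T) :
    ChainCoverable r (S ∪ T) := by
  obtain ⟨C, hC, hCr, hSC⟩ := hS
  obtain ⟨D, hD, hDr, hTD⟩ := hT
  refine ⟨C ∪ D, hC.union hD, fun c hc ↦ hc.elim (hCr c) (hDr c), ?_⟩
  rw [Set.sUnion_union]
  exact Set.union_subset_union hSC hTD

theorem exists_fin (hS : ChainCoverable r S) :
    ∃ (n : ℕ) (c : Fin n → Set α), (∀ i, IsChain r (c i)) ∧ S ⊆ ⋃ i, c i := by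
  obtain ⟨C, hC, hCr, hSC⟩ := hS
  obtain ⟨n, c, -, rfl⟩ := hC.fin_param
  exact ⟨n, c, fun i ↦ hCr _ ⟨i, rfl⟩, by rwa [← Set.sUnion_range]⟩

end ChainCoverable

theorem IsChain.chainCoverable (hS : IsChain r S) : ChainCoverable r S :=
  ⟨{S}, Set.finite_singleton S, by simpa using hS, by simp⟩

section Tree

variable [IsTrans α r]

theorem exists_incomparable_of_not_chainCoverable
    (htree : ∀ ⦃a x y⦄, r x a → r y a → r x y ∨ r y x) (hS : ¬ ChainCoverable r S) :
    ∃ a ∈ S, ∃ T ⊆ S, ¬ ChainCoverable r T ∧ ∀ x ∈ T, ¬ r a x ∧ ¬ r x a := by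
  obtain ⟨a, ha, b, hb, -, hab⟩ : ∃ a ∈ S, ∃ b ∈ S, a ≠ b ∧ ¬ (r a b ∨ r b a) := by
    by_contra! h
    exact hS (IsChain.chainCoverable h)
  push Not at hab
  have hbelow : IsChain r {x ∈ S | r x a} := fun x hx y hy _ ↦ htree hx.2 hy.2
  have hcover : S ⊆ ({x ∈ S | r x a} ∪ {x ∈ S | r a x}) ∪ {x ∈ S | ¬ r a x ∧ ¬ r x a} := by
    intro x hx
    by_cases hax : r a x <;> by_cases hxa : r x a <;> simp [hx, hax, hxa]
  by_cases habove : ChainCoverable r {x ∈ S | r a x}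
  · refine ⟨a, ha, {x ∈ S | ¬ r a x ∧ ¬ r x a}, fun x hx ↦ hx.1, fun hR ↦ hS ?_,
      fun x hx ↦ hx.2⟩
    exact ((hbelow.chainCoverable.union habove).union hR).mono hcover
  · refine ⟨b, hb, {x ∈ S | r a x}, fun x hx ↦ hx.1, habove,
      fun x ⟨_, hax⟩ ↦ ⟨fun hbx ↦ ?_, fun hxb ↦ ?_⟩⟩
    · exact (htree hax hbx).elim hab.1 hab.2
    · exact hab.1 (_root_.trans hax hxb)

theorem exists_seq_incomparable_of_not_chainCoverable
    (htree : ∀ ⦃a x y⦄, r x a → r y a → r x y ∨ r y x) (hS : ¬ ChainCoverable r S) :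
    ∃ f : ℕ → α, (∀ n, f n ∈ S) ∧ ∀ ⦃i j⦄, i < j → ¬ r (f i) (f j) ∧ ¬ r (f j) (f i) := by
  -- `choose!` needs an inhabitant of `α` to make `a` total.
  have : Nonempty α := by
    by_contra! hα
    exact hS (IsChain.chainCoverable fun x ↦ isEmptyElim x)
  choose! a ha T hTS hT hTa using
    fun S (hS : ¬ ChainCoverable r S) ↦ exists_incomparable_of_not_chainCoverable htree hS
  set U : ℕ → Set α := fun n ↦ T^[n] S
  have hUsucc : ∀ n, U (n + 1) = T (U n) := fun n ↦ Function.iterate_succ_apply' T n S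
  have hU : ∀ n, ¬ ChainCoverable r (U n) := by
    intro n
    induction n with
    | zero => exact hS
    | succ n ih => exact hUsucc n ▸ hT _ ih
  have hUanti : Antitone U := antitone_nat_of_succ_le fun n ↦ hUsucc n ▸ hTS _ (hU n)
  refine ⟨fun n ↦ a (U n), fun n ↦ hUanti n.zero_le (ha _ (hU n)), fun i j hij ↦ ?_⟩
  have hj : a (U j) ∈ T (U i) := hUsucc i ▸ hUanti hij (ha _ (hU j))
  exact hTa _ (hU i) _ hj

theorem chainCoverable_of_forall_antichain_finite [Std.Refl r]
    (htree : ∀ ⦃a x y⦄, r x a → r y a → r x y ∨ r y x)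
    (h : ∀ B ⊆ S, IsAntichain r B → B.Finite) : ChainCoverable r S := by
  by_contra hS
  obtain ⟨f, hfS, hf⟩ := exists_seq_incomparable_of_not_chainCoverable htree hS
  have hf_ne : ∀ ⦃i j⦄, i ≠ j → ¬ r (f i) (f j) := fun i j hij ↦
    hij.lt_or_gt.elim (fun hlt ↦ (hf hlt).1) (fun hgt ↦ (hf hgt).2)
  have hf_inj : Function.Injective f := fun i j hfij ↦
    by_contra fun hij ↦ hf_ne hij (hfij ▸ Std.Refl.refl _)
  refine Set.infinite_range_of_injective hf_inj (h _ ?_ ?_)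
  · exact Set.range_subset_iff.mpr hfS
  · rintro _ ⟨i, rfl⟩ _ ⟨j, rfl⟩ hfij
    exact hf_ne fun hij ↦ hfij (congrArg f hij)

end Tree

/-- If a subset `A` of `ω^{<ω}` contains no infinite antichain, then `A` can be
covered by finitely many chains. -/
theorem stmt0 (A : Set (List ℕ))
    (h : ∀ B ⊆ A, IsAntichain Compar B → B.Finite) :
    ∃ (n : ℕ) (c : Fin n → Set (List ℕ)),
      (∀ i, IsChain Compar (c i)) ∧ A ⊆ ⋃ i, c i := by
  have hA : ChainCoverable (· <+: ·) A :=
    chainCoverable_of_forall_antichain_finite (fun _ _ _ ↦ List.prefix_or_prefix_of_prefix)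
      fun B hBA hB ↦ h B hBA fun x hx y hy hxy hc ↦ hc.elim (hB hx hy hxy) (hB hy hx hxy.symm)
  obtain ⟨n, c, hc, hAc⟩ := hA.exists_fin
  exact ⟨n, c, fun i ↦ (hc i).mono_rel fun _ _ ↦ Or.inl, hAc⟩
end

section
/- For every countable family {A_n : n ∈ ω} of infinite antichains in ω^{<ω}, there exists an antichain B ⊆ ω^{<ω} such that B ∩ A_n is infinite for infinitely many n. -/
open Function

namespace Compar

theorem refl (s : List ℕ) : Compar s s := Or.inl (List.prefix_refl s)

theorem symm {s t : List ℕ} (h : Compar s t) : Compar t s := Or.symm h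

theorem of_prefix {s t x y : List ℕ} (hs : s <+: x) (ht : t <+: y) (h : Compar x y) :
    Compar s t := by
  rcases h with h | h
  · exact List.prefix_or_prefix_of_prefix (hs.trans h) ht
  · exact List.prefix_or_prefix_of_prefix hs (ht.trans h)

theorem eq_of_length_eq {s t : List ℕ} (h : Compar s t) (hl : s.length = t.length) : s = t :=
  h.elim (·.eq_of_length hl) (fun h => (h.eq_of_length hl.symm).symm)

end Compar

theorem not_compar_of_prefix_append_singleton {u s t : List ℕ} {a b : ℕ} (hab : a ≠ b)
    (hs : u ++ [a] <+: s) (ht : u ++ [b] <+: t) : ¬Compar s t := fun h =>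
  hab (by simpa using (h.of_prefix hs ht).eq_of_length_eq (by simp))

theorem eq_or_append_singleton_prefix {u x : List ℕ} (h : u <+: x) :
    x = u ∨ ∃ c, u ++ [c] <+: x := by
  obtain ⟨_ | ⟨c, t⟩, rfl⟩ := h
  · simp
  · exact Or.inr ⟨c, t, by simp⟩

def initSeg (g : ℕ → ℕ) (n : ℕ) : List ℕ := (List.range n).map g

@[simp]
theorem length_initSeg (g : ℕ → ℕ) (n : ℕ) : (initSeg g n).length = n := by
  simp [initSeg]

theorem initSeg_succ (g : ℕ → ℕ) (n : ℕ) : initSeg g (n + 1) = initSeg g n ++ [g n] := by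
  simp [initSeg, List.range_succ]

theorem initSeg_prefix_initSeg (g : ℕ → ℕ) {m n : ℕ} (h : m ≤ n) :
    initSeg g m <+: initSeg g n := by
  induction n, h using Nat.le_induction with
  | base => exact List.prefix_refl _
  | succ n _ ih => exact ih.trans (initSeg_succ g n ▸ List.prefix_append _ _)

theorem initSeg_congr {f g : ℕ → ℕ} {n : ℕ} (h : ∀ p < n, f p = g p) :
    initSeg f n = initSeg g n :=
  List.map_congr_left fun p hp => h p (List.mem_range.1 hp)

theorem compar_initSeg (g : ℕ → ℕ) (m n : ℕ) : Compar (initSeg g m) (initSeg g n) :=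
  (le_total m n).imp (initSeg_prefix_initSeg g) (initSeg_prefix_initSeg g)

theorem apply_eq_of_compar_initSeg {f g : ℕ → ℕ} {m n p : ℕ}
    (h : Compar (initSeg f m) (initSeg g n)) (hm : p < m) (hn : p < n) : f p = g p := by
  have key : ∀ {f g : ℕ → ℕ} {m n : ℕ}, initSeg f m <+: initSeg g n → p < m → f p = g p :=
    fun h hm => by simpa [initSeg] using h.getElem (by simpa using hm)
  exact h.elim (key · hm) (fun h => (key h hn).symm)

def BranchesOffAt (x : List ℕ) (g : ℕ → ℕ) (d : ℕ) : Prop :=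
  ∃ c ≠ g d, initSeg g d ++ [c] <+: x

namespace BranchesOffAt

variable {x y : List ℕ} {g : ℕ → ℕ} {d d' : ℕ}

theorem initSeg_prefix (h : BranchesOffAt x g d) : initSeg g d <+: x :=
  let ⟨_, _, hc⟩ := h; (List.prefix_append _ _).trans hc

theorem not_compar_of_lt (hx : BranchesOffAt x g d) (hy : BranchesOffAt y g d') (hd : d < d') :
    ¬Compar x y := by
  obtain ⟨c, hc, hcx⟩ := hx
  refine not_compar_of_prefix_append_singleton hc hcx ?_
  rw [← initSeg_succ]
  exact (initSeg_prefix_initSeg g hd).trans hy.initSeg_prefix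

theorem not_compar (hx : BranchesOffAt x g d) (hy : BranchesOffAt y g d') (hd : d ≠ d') :
    ¬Compar x y := by
  rcases hd.lt_or_gt with hd | hd
  · exact hx.not_compar_of_lt hy hd
  · exact fun h => hy.not_compar_of_lt hx hd h.symm

theorem le_of_initSeg_prefix {n : ℕ} (h : BranchesOffAt x g d) (hn : initSeg g n <+: x) :
    n ≤ d := by
  by_contra! hdn
  obtain ⟨c, hc, hcx⟩ := h
  refine not_compar_of_prefix_append_singleton hc hcx ?_ (Compar.refl x)
  rw [← initSeg_succ]
  exact (initSeg_prefix_initSeg g hdn).trans hn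

end BranchesOffAt

theorem eq_initSeg_or_branchesOffAt (x : List ℕ) (g : ℕ → ℕ) :
    x = initSeg g x.length ∨ ∃ d, BranchesOffAt x g d := by
  induction x using List.reverseRecOn with
  | nil => simp [initSeg]
  | append_singleton y a ih =>
    rcases ih with hy | ⟨d, c, hc, hcy⟩
    · by_cases ha : a = g y.length
      · left
        rw [List.length_append, List.length_singleton, initSeg_succ, ← hy, ha]
      · exact Or.inr ⟨y.length, a, ha, by rw [← hy]⟩
    · exact Or.inr ⟨d, c, hc, hcy.trans (List.prefix_append _ _)⟩

theorem exists_forall_initSeg {P : List ℕ → Prop} (h0 : P [])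
    (h : ∀ u, P u → ∃ c, P (u ++ [c])) : ∃ g : ℕ → ℕ, ∀ n, P (initSeg g n) := by
  choose next hnext using h
  let U : ℕ → {u // P u} := fun n => Nat.rec ⟨[], h0⟩ (fun _ u => ⟨_, hnext u u.2⟩) n
  refine ⟨fun n => next (U n).1 (U n).2, fun n => ?_⟩
  suffices (U n).1 = initSeg (fun n => next (U n).1 (U n).2) n from this ▸ (U n).2
  induction n with
  | zero => rfl
  | succ n ih => rw [initSeg_succ, ← ih]

def HasFan (S : Set (List ℕ)) : Prop :=
  ∃ (u : List ℕ) (c : ℕ → ℕ) (Y : ℕ → List ℕ), StrictMono c ∧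
    ∀ i, Y i ∈ S ∧ u ++ [c i] <+: Y i

def HasComb (S : Set (List ℕ)) : Prop :=
  ∃ (g : ℕ → ℕ) (e : ℕ → ℕ) (Y : ℕ → List ℕ), StrictMono e ∧
    ∀ i, Y i ∈ S ∧ BranchesOffAt (Y i) g (e i)

theorem hasFan_of_finite_children {S : Set (List ℕ)} {u : List ℕ}
    (hu : {x ∈ S | u <+: x}.Infinite) (hchild : ∀ c, {x ∈ S | u ++ [c] <+: x}.Finite) :
    HasFan S := by
  set C := {c | ∃ x ∈ S, u ++ [c] <+: x}
  have hC : C.Infinite := by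
    intro hC
    refine hu ((((hC.biUnion fun c _ => hchild c)).insert u).subset ?_)
    rintro x ⟨hxS, hux⟩
    rcases eq_or_append_singleton_prefix hux with rfl | ⟨c, hc⟩
    · exact Set.mem_insert x _
    · exact Set.mem_insert_of_mem _ (Set.mem_biUnion ⟨x, hxS, hc⟩ ⟨hxS, hc⟩)
  choose Y hY using Nat.nth_mem_of_infinite hC
  exact ⟨u, Nat.nth (· ∈ C), Y, Nat.nth_strictMono hC, hY⟩

theorem hasComb_of_forall_initSeg {S : Set (List ℕ)} (hS : IsAntichain Compar S) {g : ℕ → ℕ}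
    (hg : ∀ n, {x ∈ S | initSeg g n <+: x}.Infinite) : HasComb S := by
  have hdeep : ∀ n, ∃ x ∈ S, ∃ d, n ≤ d ∧ BranchesOffAt x g d := by
    intro n
    have hon : {x ∈ S | x = initSeg g x.length}.Subsingleton := fun x hx y hy => by
      by_contra hxy
      exact hS hx.1 hy.1 hxy (hx.2 ▸ hy.2 ▸ compar_initSeg g _ _)
    obtain ⟨x, ⟨hxS, hgx⟩, hx⟩ := ((hg n).sdiff hon.finite).nonempty
    obtain ⟨d, hd⟩ := (eq_initSeg_or_branchesOffAt x g).resolve_left (fun h => hx ⟨hxS, h⟩)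
    exact ⟨x, hxS, d, hd.le_of_initSeg_prefix hgx, hd⟩
  choose x hxS d hnd hd using hdeep
  obtain ⟨φ, -, hφ⟩ := Filter.strictMono_subseq_of_id_le hnd
  exact ⟨g, d ∘ φ, x ∘ φ, hφ, fun i => ⟨hxS _, hd _⟩⟩

theorem hasFan_or_hasComb {S : Set (List ℕ)} (hS : IsAntichain Compar S) (hinf : S.Infinite) :
    HasFan S ∨ HasComb S := by
  by_cases h : ∃ u, {x ∈ S | u <+: x}.Infinite ∧ ∀ c, {x ∈ S | u ++ [c] <+: x}.Finite
  · obtain ⟨u, hu, hchild⟩ := h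
    exact Or.inl (hasFan_of_finite_children hu hchild)
  · push Not at h
    have h0 : {x ∈ S | [] <+: x}.Infinite := by simpa using hinf
    obtain ⟨g, hg⟩ := exists_forall_initSeg h0 h
    exact Or.inr (hasComb_of_forall_initSeg hS hg)

theorem exists_infinite_fiber_or_injective {β : Type*} (f : ℕ → β) :
    (∃ b, {j | f j = b}.Infinite) ∨ ∃ τ : ℕ → ℕ, Injective (f ∘ τ) := by
  by_cases hf : (Set.range f).Finite
  · have := hf.to_subtype
    obtain ⟨b, hb⟩ := Finite.exists_infinite_fiber (Set.rangeFactorization f)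
    refine Or.inl ⟨b, ?_⟩
    convert Set.infinite_coe_iff.1 hb using 1
    ext j
    simp [Set.rangeFactorization, Subtype.ext_iff]
  · choose τ hτ using fun k => (Set.Infinite.natEmbedding _ hf k).2
    refine Or.inr ⟨τ, fun a b hab => (Set.Infinite.natEmbedding _ hf).injective ?_⟩
    exact Subtype.ext ((hτ a).symm.trans (hab.trans (hτ b)))

theorem exists_chain_or_antichain_subseq {t : ℕ → List ℕ} (ht : Injective t) :
    ∃ φ : ℕ → ℕ, StrictMono φ ∧ ((∀ i j, i < j → t (φ i) <+: t (φ j)) ∨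
      Pairwise fun i j => ¬Compar (t (φ i)) (t (φ j))) := by
  obtain ⟨g₁, h₁ | h₁⟩ := exists_increasing_or_nonincreasing_subseq (· <+: ·) t
  · exact ⟨g₁, g₁.strictMono, Or.inl h₁⟩
  obtain ⟨g₂, h₂ | h₂⟩ :=
    exists_increasing_or_nonincreasing_subseq (fun a b => b <+: a) (t ∘ g₁)
  · -- a strictly decreasing chain would consist of prefixes of its first term
    refine absurd ((t (g₁ (g₂ 0))).inits.finite_toSet.subset ?_)
      (Set.infinite_range_of_injective (ht.comp (g₁.injective.comp g₂.injective)))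
    rintro _ ⟨n, rfl⟩
    simp only [Set.mem_ofPred_eq, List.mem_inits]
    rcases n.eq_zero_or_pos with rfl | hn
    · exact List.prefix_refl _
    · exact h₂ 0 n hn
  · refine ⟨g₁ ∘ g₂, g₁.strictMono.comp g₂.strictMono, Or.inr fun i j hij => ?_⟩
    rcases hij.lt_or_gt with h | h
    · exact fun hc => hc.elim (h₁ _ _ (g₂.strictMono h)) (h₂ _ _ h)
    · exact fun hc => hc.elim (h₂ _ _ h) (h₁ _ _ (g₂.strictMono h))

theorem exists_pairwise_not_compar_initSeg {g : ℕ → ℕ → ℕ} (hg : Injective g) :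
    ∃ φ m : ℕ → ℕ,
      Pairwise fun k k' => ¬Compar (initSeg (g (φ k)) (m k)) (initSeg (g (φ k')) (m k')) := by
  have ht : Injective fun j => initSeg (g j) j := fun a b h => by
    simpa using congrArg List.length h
  obtain ⟨φ, hφ, hchain | hanti⟩ := exists_chain_or_antichain_subseq ht
  case inr => exact ⟨φ, φ, hanti⟩
  have hcompar : ∀ k k', Compar (initSeg (g (φ k)) (φ k)) (initSeg (g (φ k')) (φ k')) := by
    intro k k'
    rcases lt_trichotomy k k' with h | rfl | h
    · exact Or.inl (hchain _ _ h)
    · exact Compar.refl _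
    · exact Or.inr (hchain _ _ h)
  -- the chain converges to the branch `G`, and the `g (φ k)` leave it at depths tending to `∞`
  set G : ℕ → ℕ := fun p => g (φ (p + 1)) p
  have hagree : ∀ k p, p < φ k → g (φ k) p = G p := fun k p hp =>
    apply_eq_of_compar_initSeg (g := g (φ (p + 1))) (hcompar k (p + 1)) hp (hφ.id_le (p + 1))
  have hdeep : ∀ k, ∃ k' N d, k ≤ d ∧ BranchesOffAt (initSeg (g (φ k')) N) G d := by
    intro k
    obtain ⟨k', hkk', hk'⟩ : ∃ k', k ≤ k' ∧ g (φ k') ≠ G := by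
      by_contra! h
      exact hφ.injective.ne (Nat.succ_ne_self k).symm
        (hg ((h k le_rfl).trans (h _ k.le_succ).symm))
    obtain ⟨p, hp⟩ := Function.ne_iff.1 hk'
    set N := p + 1 + φ k'
    obtain ⟨d, hd⟩ := (eq_initSeg_or_branchesOffAt (initSeg (g (φ k')) N) G).resolve_left
      fun h => hp (apply_eq_of_compar_initSeg (m := N) (n := N)
        (by rw [length_initSeg] at h; exact h ▸ Compar.refl _) (by omega) (by omega))
    refine ⟨k', N, d, ?_, hd⟩
    have hpre : initSeg G (φ k') <+: initSeg (g (φ k')) N := by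
      rw [← initSeg_congr (hagree k')]
      exact initSeg_prefix_initSeg _ (by omega)
    exact hkk'.trans ((hφ.id_le k').trans (hd.le_of_initSeg_prefix hpre))
  choose k' N d hkd hd using hdeep
  obtain ⟨ψ, -, hψ⟩ := Filter.strictMono_subseq_of_id_le hkd
  exact ⟨φ ∘ k' ∘ ψ, N ∘ ψ, fun a b hab => (hd _).not_compar (hd _) (hψ.injective.ne hab)⟩

theorem exists_injective_reindex {κ : ℕ → ℕ → ℕ} (hκ : ∀ j, StrictMono (κ j)) :
    ∃ s : ℕ → ℕ → ℕ, Injective fun p : ℕ × ℕ => κ p.1 (s p.1 p.2) := by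
  -- greedily along `Nat.pair`: the key chosen at step `k + 1` exceeds the one chosen at step `k`
  let M : ℕ → ℕ := fun k => Nat.rec 0 (fun k m => κ (Nat.unpair k).1 (m + 1)) k
  have hM : StrictMono M := strictMono_nat_of_lt_succ fun k =>
    (Nat.lt_succ_self _).trans_le ((hκ _).id_le _)
  refine ⟨fun j i => M (Nat.pair j i) + 1, fun p q h => ?_⟩
  have h' : M (Nat.pair p.1 p.2 + 1) = M (Nat.pair q.1 q.2 + 1) := by
    simpa [M, Nat.unpair_pair] using h
  exact Prod.ext_iff.2 (Nat.pair_eq_pair.1 (Nat.succ_injective (hM.injective h')))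

def HasAntichainMeetingInfinitelyMany (A : ℕ → Set (List ℕ)) : Prop :=
  ∃ B : Set (List ℕ), IsAntichain Compar B ∧ {n | (B ∩ A n).Infinite}.Infinite

namespace HasAntichainMeetingInfinitelyMany

variable {A : ℕ → Set (List ℕ)} {ν : ℕ → ℕ}

theorem of_pairwise (hν : Injective ν) {y : ℕ × ℕ → List ℕ}
    (hyA : ∀ p, y p ∈ A (ν p.1)) (hy : Pairwise fun p q => ¬Compar (y p) (y q)) :
    HasAntichainMeetingInfinitelyMany A := by
  have hinj : Injective y := fun p q h => by_contra fun hpq => hy hpq (h ▸ Compar.refl _)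
  refine ⟨Set.range y, ?_, Set.infinite_of_injective_forall_mem hν fun j => ?_⟩
  · rintro _ ⟨p, rfl⟩ _ ⟨q, rfl⟩ hne
    exact hy fun h => hne (h ▸ rfl)
  · exact Set.infinite_of_injective_forall_mem (hinj.comp (Prod.mk_right_injective j))
      fun i => ⟨⟨_, rfl⟩, hyA (j, i)⟩

theorem of_keys (hν : Injective ν) {Y : ℕ → ℕ → List ℕ}
    (hYA : ∀ j i, Y j i ∈ A (ν j)) {κ : ℕ → ℕ → ℕ} (hκ : ∀ j, StrictMono (κ j))
    (hsep : ∀ j i j' i', κ j i ≠ κ j' i' → ¬Compar (Y j i) (Y j' i')) :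
    HasAntichainMeetingInfinitelyMany A := by
  obtain ⟨s, hs⟩ := exists_injective_reindex hκ
  exact of_pairwise hν (y := fun p => Y p.1 (s p.1 p.2))
    (fun p => hYA _ _) fun p q hpq => hsep _ _ _ _ (hs.ne hpq)

section Fans

variable {c : ℕ → ℕ → ℕ} {Y : ℕ → ℕ → List ℕ}

theorem of_fans_common_root (hν : Injective ν) {u : List ℕ}
    (hc : ∀ j, StrictMono (c j)) (hY : ∀ j i, Y j i ∈ A (ν j) ∧ u ++ [c j i] <+: Y j i) :
    HasAntichainMeetingInfinitelyMany A :=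
  of_keys hν (fun j i => (hY j i).1) hc
    fun _ _ _ _ h => not_compar_of_prefix_append_singleton h (hY _ _).2 (hY _ _).2

theorem of_fans_incomparable_roots (hν : Injective ν)
    {u : ℕ → List ℕ} (hu : Pairwise fun j j' => ¬Compar (u j) (u j'))
    (hc : ∀ j, Injective (c j)) (hY : ∀ j i, Y j i ∈ A (ν j) ∧ u j ++ [c j i] <+: Y j i) :
    HasAntichainMeetingInfinitelyMany A := by
  refine of_pairwise hν (y := fun p => Y p.1 p.2) (fun p => (hY _ _).1) ?_
  rintro ⟨j, i⟩ ⟨j', i'⟩ hne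
  by_cases hj : j = j'
  · subst hj
    have hi : i ≠ i' := fun hi => hne (hi ▸ rfl)
    exact not_compar_of_prefix_append_singleton ((hc j).ne hi) (hY j i).2 (hY j i').2
  · exact fun h => hu hj (h.of_prefix ((List.prefix_append _ _).trans (hY j i).2)
      ((List.prefix_append _ _).trans (hY j' i').2))

theorem of_fans_chain_roots (hν : Injective ν)
    {u : ℕ → List ℕ} (hu : ∀ j j', j < j' → u j <+: u j') (hu' : Injective u)
    (hc : ∀ j, StrictMono (c j)) (hY : ∀ j i, Y j i ∈ A (ν j) ∧ u j ++ [c j i] <+: Y j i) :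
    HasAntichainMeetingInfinitelyMany A := by
  choose a ha using fun j =>
    (eq_or_append_singleton_prefix (hu j (j + 1) j.lt_succ_self)).resolve_left
      (hu'.ne (Nat.succ_ne_self j))
  -- the `j`-th fan is cut down to the children of `u j` beyond `a j`, which avoids `u (j + 1)`
  have hfar : ∀ j i, c j (a j + 1 + i) ≠ a j := fun j i =>
    (lt_of_lt_of_le (by omega) (hc j).le_apply).ne'
  have hmono : ∀ j j', j ≤ j' → u j <+: u j' := fun j j' h =>
    h.eq_or_lt.elim (fun h => h ▸ List.prefix_refl _) (hu j j')
  have hlt : ∀ j j' i i', j < j' → ¬Compar (Y j (a j + 1 + i)) (Y j' (a j' + 1 + i')) :=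
    fun j j' i i' hj => not_compar_of_prefix_append_singleton (hfar j i) (hY j _).2 <|
      (ha j).trans ((hmono _ _ hj).trans ((List.prefix_append _ _).trans (hY j' _).2))
  refine of_pairwise hν (y := fun p => Y p.1 (a p.1 + 1 + p.2))
    (fun p => (hY _ _).1) ?_
  rintro ⟨j, i⟩ ⟨j', i'⟩ hne
  rcases lt_trichotomy j j' with hj | rfl | hj
  · exact hlt j j' i i' hj
  · have hi : i ≠ i' := fun hi => hne (hi ▸ rfl)
    exact not_compar_of_prefix_append_singleton ((hc j).injective.ne (by dsimp only; omega))
      (hY j _).2 (hY j _).2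
  · exact fun h => hlt j' j i' i hj h.symm

end Fans

section Combs

variable {e : ℕ → ℕ → ℕ} {Y : ℕ → ℕ → List ℕ}

theorem of_combs_common_branch (hν : Injective ν)
    {g : ℕ → ℕ} (he : ∀ j, StrictMono (e j))
    (hY : ∀ j i, Y j i ∈ A (ν j) ∧ BranchesOffAt (Y j i) g (e j i)) :
    HasAntichainMeetingInfinitelyMany A :=
  of_keys hν (fun j i => (hY j i).1) he
    fun _ _ _ _ h => (hY _ _).2.not_compar (hY _ _).2 h

theorem of_combs_incomparable_branches (hν : Injective ν)
    {g : ℕ → ℕ → ℕ} {m : ℕ → ℕ}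
    (hg : Pairwise fun j j' => ¬Compar (initSeg (g j) (m j)) (initSeg (g j') (m j')))
    (he : ∀ j, StrictMono (e j))
    (hY : ∀ j i, Y j i ∈ A (ν j) ∧ BranchesOffAt (Y j i) (g j) (e j i)) :
    HasAntichainMeetingInfinitelyMany A := by
  have hpre : ∀ j i, initSeg (g j) (m j) <+: Y j (m j + i) := fun j i =>
    (initSeg_prefix_initSeg _ (le_trans (by omega) (he j).le_apply)).trans
      (hY j _).2.initSeg_prefix
  refine of_pairwise hν (y := fun p => Y p.1 (m p.1 + p.2))
    (fun p => (hY _ _).1) ?_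
  rintro ⟨j, i⟩ ⟨j', i'⟩ hne
  by_cases hj : j = j'
  · subst hj
    have hi : i ≠ i' := fun hi => hne (hi ▸ rfl)
    exact (hY j _).2.not_compar (hY j _).2 ((he j).injective.ne (by dsimp only; omega))
  · exact fun h => hg hj (h.of_prefix (hpre j i) (hpre j' i'))

end Combs

theorem of_hasFan (h : {n | HasFan (A n)}.Infinite) :
    HasAntichainMeetingInfinitelyMany A := by
  choose u c Y hc hY using Nat.nth_mem_of_infinite h
  set ν := Nat.nth fun n => HasFan (A n)
  have hν := (Nat.nth_strictMono h).injective
  rcases exists_infinite_fiber_or_injective u with ⟨u₀, hfib⟩ | ⟨τ, hτ⟩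
  · set σ := Nat.nth fun j => u j = u₀
    have hY₀ : ∀ j i, Y (σ j) i ∈ A (ν (σ j)) ∧ u₀ ++ [c (σ j) i] <+: Y (σ j) i :=
      fun j i => by
        rw [← Nat.nth_mem_of_infinite hfib j]
        exact hY _ i
    exact of_fans_common_root
      (hν.comp (Nat.nth_strictMono hfib).injective) (fun j => hc (σ j)) hY₀
  · have hν' := hν.comp hτ.of_comp
    obtain ⟨φ, hφ, hchain | hanti⟩ := exists_chain_or_antichain_subseq hτ
    · exact of_fans_chain_roots (hν'.comp hφ.injective) hchain
        (hτ.comp hφ.injective) (fun j => hc _) fun j i => hY _ i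
    · exact of_fans_incomparable_roots (hν'.comp hφ.injective)
        hanti (fun j => (hc _).injective) fun j i => hY _ i

theorem of_hasComb (h : {n | HasComb (A n)}.Infinite) :
    HasAntichainMeetingInfinitelyMany A := by
  choose g e Y he hY using Nat.nth_mem_of_infinite h
  set ν := Nat.nth fun n => HasComb (A n)
  have hν := (Nat.nth_strictMono h).injective
  rcases exists_infinite_fiber_or_injective g with ⟨g₀, hfib⟩ | ⟨τ, hτ⟩
  · set σ := Nat.nth fun j => g j = g₀
    have hY₀ : ∀ j i, Y (σ j) i ∈ A (ν (σ j)) ∧ BranchesOffAt (Y (σ j) i) g₀ (e (σ j) i) :=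
      fun j i => by
        rw [← Nat.nth_mem_of_infinite hfib j]
        exact hY _ i
    exact of_combs_common_branch
      (hν.comp (Nat.nth_strictMono hfib).injective) (fun j => he (σ j)) hY₀
  · obtain ⟨φ, m, hsep⟩ := exists_pairwise_not_compar_initSeg hτ
    have hτφ : Injective (τ ∘ φ) := fun a b hab => by_contra fun hne =>
      hsep hne (by simp only [comp_apply] at hab ⊢; rw [hab]; exact compar_initSeg _ _ _)
    exact of_combs_incomparable_branches (hν.comp hτφ) hsep
      (fun j => he _) fun j i => hY _ i

end HasAntichainMeetingInfinitelyMany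

/-- For every countable family of infinite antichains `A n` in `ω^{<ω}`, there is an
antichain `B` whose intersection with `A n` is infinite for infinitely many `n`. -/
theorem stmt1 (A : ℕ → Set (List ℕ))
    (hanti : ∀ n, IsAntichain Compar (A n))
    (hinf : ∀ n, (A n).Infinite) :
    ∃ B : Set (List ℕ), IsAntichain Compar B ∧
      {n | (B ∩ A n).Infinite}.Infinite := by
  have hcover : {n | HasFan (A n)} ∪ {n | HasComb (A n)} = Set.univ :=
    Set.eq_univ_of_forall fun n => hasFan_or_hasComb (hanti n) (hinf n)
  rcases Set.infinite_union.1 (hcover ▸ Set.infinite_univ) with hfan | hcomb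
  · exact HasAntichainMeetingInfinitelyMany.of_hasFan hfan
  · exact HasAntichainMeetingInfinitelyMany.of_hasComb hcomb
end

section
/- Let S ⊆ ω^{<ω} be a tree (closed under initial segments) with no infinite antichains. Then there is a finite set B of nodes such that every element of S extends to, or is comparable with, a node of B, and S is covered by finitely many branches (i.e., S ⊆ ⋃_{s∈B} {f↾n : n ∈ ω} for suitable branches f). -/
/-- A tree on `ω` is a set of finite sequences closed under initial segments. -/
def IsTree (T : Set (List ℕ)) : Prop := ∀ s ∈ T, ∀ t, t <+: s → t ∈ T

/-- The branch-set `f̂ = {f↾n : n ∈ ω}` of `f ∈ ω^ω`. -/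
def branchSet (f : ℕ → ℕ) : Set (List ℕ) := {l | ∃ n, l = (List.range n).map f}

/-- A node splits in `S` if it has two incomparable extensions in `S`. -/
def Splits (S : Set (List ℕ)) (s : List ℕ) : Prop :=
  ∃ t ∈ S, ∃ u ∈ S, s <+: t ∧ s <+: u ∧ ¬ Compar t u

lemma Splits.of_prefix {S : Set (List ℕ)} {r s : List ℕ} (hrs : r <+: s)
    (hs : Splits S s) : Splits S r := by
  obtain ⟨t, ht, u, hu, h1, h2, h3⟩ := hs
  exact ⟨t, ht, u, hu, hrs.trans h1, hrs.trans h2, h3⟩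

/-- The children of `s` in `S` form an antichain, hence a finite set. -/
lemma children_finite (S : Set (List ℕ))
    (h : ∀ B ⊆ S, IsAntichain Compar B → B.Finite) (s : List ℕ) :
    {c | c ∈ S ∧ s <+: c ∧ c.length = s.length + 1}.Finite := by
  apply h _ (fun c hc => hc.1)
  intro a ha b hb hne hcomp
  apply hne
  rcases hcomp with hc | hc
  · exact hc.eq_of_length_le (by rw [ha.2.2, hb.2.2])
  · exact (hc.eq_of_length_le (by rw [ha.2.2, hb.2.2])).symm

/-- Key finiteness: the set of splitting nodes is finite. -/
lemma splits_finite (S : Set (List ℕ)) (htree : IsTree S)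
    (h : ∀ B ⊆ S, IsAntichain Compar B → B.Finite) :
    {s | Splits S s}.Finite := by
  by_contra hinf
  replace hinf : {s | Splits S s}.Infinite := hinf
  set T := {s | Splits S s} with hT
  have hTS : T ⊆ S := by
    intro s hs
    obtain ⟨t, ht, u, hu, h1, h2, h3⟩ := hs
    exact htree t ht s h1
  have hdown : ∀ r s : List ℕ, r <+: s → s ∈ T → r ∈ T :=
    fun r s hrs hs => Splits.of_prefix hrs hs
  set Ext : List ℕ → Set (List ℕ) := fun s => {t | t ∈ T ∧ s <+: t} with hExt
  -- every node with infinitely many splitting extensions has a child with the same property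
  have key : ∀ s, (Ext s).Infinite →
      ∃ c, (Ext c).Infinite ∧ s <+: c ∧ c.length = s.length + 1 := by
    intro s hs
    by_contra hno
    push_neg at hno
    apply hs
    have hsub : Ext s ⊆ insert s
        (⋃ c ∈ {c | c ∈ S ∧ s <+: c ∧ c.length = s.length + 1}, Ext c) := by
      rintro t ⟨htT, hst⟩
      by_cases hts : t = s
      · exact hts ▸ Set.mem_insert _ _
      · have hlt : s.length < t.length :=
          lt_of_le_of_ne hst.length_le
            (fun he => hts (hst.eq_of_length_le he.ge).symm)
        refine Set.mem_insert_iff.2 (Or.inr ?_)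
        have hcmem : t.take (s.length + 1) ∈
            {c | c ∈ S ∧ s <+: c ∧ c.length = s.length + 1} := by
          refine ⟨htree t (hTS htT) _ (List.take_prefix _ t), ?_, ?_⟩
          · exact List.prefix_take_iff.2 ⟨hst, by omega⟩
          · rw [List.length_take]; omega
        exact Set.mem_biUnion hcmem ⟨htT, List.take_prefix _ t⟩
    refine Set.Finite.subset (Set.Finite.insert s
      ((children_finite S h s).biUnion (fun c hc => ?_))) hsub
    by_contra hcinf
    replace hcinf : (Ext c).Infinite := hcinf
    exact hno c hcinf hc.2.1 hc.2.2
  have h0 : (Ext ([] : List ℕ)).Infinite :=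
    hinf.mono (fun t ht => ⟨ht, List.nil_prefix⟩)
  choose next hinf' hpre hlen using key
  -- build an infinite branch through the splitting nodes
  let b : ℕ → {s : List ℕ // (Ext s).Infinite} := fun n =>
    Nat.rec ⟨[], h0⟩ (fun _ p => ⟨next p.1 p.2, hinf' p.1 p.2⟩) n
  have hblen : ∀ n, (b n).1.length = n := by
    intro n
    induction n with
    | zero => rfl
    | succ n ih =>
      show (next (b n).1 (b n).2).length = n + 1
      rw [hlen, ih]
  have hbpre : ∀ n, (b n).1 <+: (b (n+1)).1 := fun n => hpre (b n).1 (b n).2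
  have hbmono : ∀ {n m : ℕ}, n ≤ m → (b n).1 <+: (b m).1 := by
    intro n m hnm
    induction m, hnm using Nat.le_induction with
    | base => exact List.prefix_rfl
    | succ m hm ih => exact ih.trans (hbpre m)
  have hbT : ∀ n, (b n).1 ∈ T := by
    intro n
    obtain ⟨t, htT, hpt⟩ := (b n).2.nonempty
    exact hdown _ _ hpt htT
  -- from each branch node pick an extension leaving the branch
  have hw : ∀ n, ∃ wn, wn ∈ S ∧ (b n).1 <+: wn ∧ wn ≠ (b wn.length).1 := by
    intro n
    obtain ⟨t, ht, u, hu, h1, h2, h3⟩ := hbT n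
    by_contra hno
    push_neg at hno
    apply h3
    have ht' := hno t ht h1
    have hu' := hno u hu h2
    rcases le_total t.length u.length with hle | hle
    · exact Or.inl (by rw [ht', hu']; exact hbmono hle)
    · exact Or.inr (by rw [ht', hu']; exact hbmono hle)
  choose w hwS hwp hwne using hw
  let N : ℕ → ℕ := fun k => Nat.rec 0 (fun _ nk => (w nk).length + 1) k
  have hNw : ∀ k, (w (N k)).length < N (k+1) := fun k => Nat.lt_succ_self _
  have hNle : ∀ k, N k ≤ (w (N k)).length := by
    intro k
    have := (hwp (N k)).length_le
    rwa [hblen] at this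
  have hNmono : StrictMono N :=
    strictMono_nat_of_lt_succ (fun k => lt_of_le_of_lt (hNle k) (hNw k))
  have hinc : ∀ k l, k < l → ¬ Compar (w (N k)) (w (N l)) := by
    intro k l hkl hcomp
    have hxl : (w (N k)).length < N l :=
      lt_of_lt_of_le (hNw k) (hNmono.monotone hkl)
    rcases hcomp with hc | hc
    · have hb' : (b (N l)).1 <+: w (N l) := hwp (N l)
      have h1 : w (N k) <+: (b (N l)).1 :=
        List.prefix_of_prefix_length_le hc hb' (by rw [hblen]; omega)
      have h2 : (b ((w (N k)).length)).1 <+: (b (N l)).1 := hbmono (le_of_lt hxl)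
      have h3 : w (N k) <+: (b ((w (N k)).length)).1 :=
        List.prefix_of_prefix_length_le h1 h2 (by rw [hblen])
      exact hwne (N k) (h3.eq_of_length_le (by rw [hblen]))
    · have h1 := hc.length_le
      have h2 := (hwp (N l)).length_le
      rw [hblen] at h2
      omega
  have hinj : Function.Injective (fun k => w (N k)) := by
    intro k l he
    simp only at he
    by_contra hne
    rcases lt_or_gt_of_ne hne with hlt | hlt
    · exact hinc k l hlt (Or.inl (by rw [he]))
    · exact hinc l k hlt (Or.inl (by rw [he]))
  have hsub : Set.range (fun k => w (N k)) ⊆ S := by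
    rintro _ ⟨k, rfl⟩
    exact hwS (N k)
  have hanti : IsAntichain Compar (Set.range fun k => w (N k)) := by
    rintro _ ⟨k, rfl⟩ _ ⟨l, rfl⟩ hne hcomp
    rcases lt_trichotomy k l with hlt | heq | hlt
    · exact hinc k l hlt hcomp
    · exact hne (by rw [heq])
    · exact hinc l k hlt (Or.symm hcomp)
  exact (Set.infinite_range_of_injective hinj) (h _ hsub hanti)

open Classical in
/-- The branch function swallowing the chain of extensions of `r` in `S`. -/
noncomputable def chainFun (S : Set (List ℕ)) (r : List ℕ) : ℕ → ℕ := fun n =>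
  if h : ∃ t, (t ∈ S ∧ r <+: t) ∧ n < t.length then h.choose.getD n 0 else 0

lemma chainFun_spec (S : Set (List ℕ)) (r : List ℕ)
    (hns : ∀ t ∈ S, ∀ u ∈ S, r <+: t → r <+: u → Compar t u)
    {t : List ℕ} (ht : t ∈ S) (hrt : r <+: t) :
    t = (List.range t.length).map (chainFun S r) := by
  apply List.ext_getElem (by simp)
  intro i h1 h2
  simp only [List.getElem_map, List.getElem_range]
  have hex : ∃ l, (l ∈ S ∧ r <+: l) ∧ i < l.length := ⟨t, ⟨ht, hrt⟩, h1⟩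
  rw [chainFun, dif_pos hex]
  obtain ⟨⟨hS', hr'⟩, hlen'⟩ := hex.choose_spec
  rcases hns t ht _ hS' hrt hr' with hc | hc
  · rw [List.getD_eq_getElem _ _ hlen']
    exact hc.getElem h1
  · rw [List.getD_eq_getElem _ _ hlen']
    exact (hc.getElem hlen').symm

open Classical in
/-- A branch function for each basis node. -/
noncomputable def gfun (S : Set (List ℕ)) (b : List ℕ) : ℕ → ℕ :=
  if Splits S b then (fun n => b.getD n 0) else chainFun S b

lemma mem_branch_of_getD (l : List ℕ) :
    l = (List.range l.length).map (fun n => l.getD n 0) := by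
  apply List.ext_getElem (by simp)
  intro i h1 h2
  simp only [List.getElem_map, List.getElem_range]
  exact (List.getD_eq_getElem _ _ h1).symm

/-- A tree `S ⊆ ω^{<ω}` with no infinite antichains has a finite set `B` of nodes such
that every element of `S` is comparable with a node of `B`, and `S` is covered by
finitely many branch-sets. -/
theorem stmt2 (S : Set (List ℕ)) (htree : IsTree S)
    (h : ∀ B ⊆ S, IsAntichain Compar B → B.Finite) :
    (∃ B : Finset (List ℕ), ↑B ⊆ S ∧ ∀ s ∈ S, ∃ b ∈ B, Compar s b) ∧
    (∃ F : Finset (ℕ → ℕ), S ⊆ ⋃ f ∈ F, branchSet f) := by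
  classical
  have hTfin : {s | Splits S s}.Finite := splits_finite S htree h
  have hTS : {s | Splits S s} ⊆ S := by
    intro s hs
    obtain ⟨t, ht, u, hu, h1, h2, h3⟩ := hs
    exact htree t ht s h1
  set Fr : Set (List ℕ) :=
    {s | s ∈ S ∧ ¬ Splits S s ∧ (s = [] ∨ Splits S s.dropLast)} with hFr
  have hFrfin : Fr.Finite := by
    have hsub : Fr ⊆ insert []
        (⋃ t ∈ {s | Splits S s},
          {c | c ∈ S ∧ t <+: c ∧ c.length = t.length + 1}) := by
      rintro s ⟨hsS, hns, hcase⟩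
      rcases hcase with rfl | hdl
      · exact Set.mem_insert _ _
      · refine Set.mem_insert_iff.2 (Or.inr (Set.mem_biUnion hdl ?_))
        refine ⟨hsS, List.dropLast_prefix s, ?_⟩
        have hne : s ≠ [] := by
          rintro rfl
          exact hns (Splits.of_prefix (List.nil_prefix) hdl)
        have hl : 1 ≤ s.length := List.length_pos_iff.2 hne
        rw [List.length_dropLast]
        omega
    exact Set.Finite.subset (Set.Finite.insert _
      (hTfin.biUnion (fun t _ => children_finite S h t))) hsub
  have cover : ∀ s, s ∈ S → Splits S s ∨ ∃ r ∈ Fr, r <+: s := by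
    intro s
    induction s using List.reverseRecOn with
    | nil =>
      intro hS
      by_cases hsp : Splits S []
      · exact Or.inl hsp
      · exact Or.inr ⟨[], ⟨hS, hsp, Or.inl rfl⟩, List.nil_prefix⟩
    | append_singleton s a ih =>
      intro hS
      by_cases hsp : Splits S (s ++ [a])
      · exact Or.inl hsp
      have hsS : s ∈ S := htree _ hS s (List.prefix_append s [a])
      by_cases hsp' : Splits S s
      · refine Or.inr ⟨s ++ [a], ⟨hS, hsp, Or.inr ?_⟩, List.prefix_rfl⟩
        rw [List.dropLast_concat]
        exact hsp'
      · rcases ih hsS with h1 | ⟨r, hr, hrp⟩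
        · exact absurd h1 hsp'
        · exact Or.inr ⟨r, hr, hrp.trans (List.prefix_append s [a])⟩
  have hBfin : ({s | Splits S s} ∪ Fr).Finite := hTfin.union hFrfin
  refine ⟨⟨hBfin.toFinset, ?_, ?_⟩, ?_⟩
  · rw [Set.Finite.coe_toFinset]
    rintro s (hs | hs)
    · exact hTS hs
    · exact hs.1
  · intro s hs
    rcases cover s hs with hsp | ⟨r, hr, hrp⟩
    · exact ⟨s, hBfin.mem_toFinset.2 (Or.inl hsp), Or.inl List.prefix_rfl⟩
    · exact ⟨r, hBfin.mem_toFinset.2 (Or.inr hr), Or.inr hrp⟩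
  · refine ⟨hBfin.toFinset.image (gfun S), ?_⟩
    intro s hs
    rcases cover s hs with hsp | ⟨r, hr, hrp⟩
    · refine Set.mem_iUnion₂.2 ⟨gfun S s,
        Finset.mem_image_of_mem _ (hBfin.mem_toFinset.2 (Or.inl hsp)), ?_⟩
      refine ⟨s.length, ?_⟩
      rw [gfun, if_pos hsp]
      exact mem_branch_of_getD s
    · refine Set.mem_iUnion₂.2 ⟨gfun S r,
        Finset.mem_image_of_mem _ (hBfin.mem_toFinset.2 (Or.inr hr)), ?_⟩
      refine ⟨s.length, ?_⟩
      rw [gfun, if_neg hr.2.1]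
      refine chainFun_spec S r ?_ hs hrp
      intro t ht u hu h1 h2
      by_contra hc
      exact hr.2.1 ⟨t, ht, u, hu, h1, h2, hc⟩
end

section
/- Let 𝒜 be a MAD family on ω and T ⊆ ω^{<ω} a tree such that for every s ∈ T the set suc_T(s) = {n : s⌢n ∈ T} is I(𝒜)-positive. Then there is a subtree S ⊆ T and an injective assignment s ↦ A_s ∈ 𝒜 such that for each s ∈ S, suc_S(s) is an infinite subset of A_s, and the sets suc_S(s) for distinct s ∈ S are pairwise disjoint. -/
/-- The restriction `f↾n` of `f : ω → ω`, as a finite sequence. -/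
def res (f : ℕ → ℕ) (n : ℕ) : List ℕ := (List.range n).map f

/-- The successor set `suc_T(s) = {n : s⌢n ∈ T}`. -/
def sucT (T : Set (List ℕ)) (s : List ℕ) : Set ℕ := {n | s ++ [n] ∈ T}

/-- `f ∈ [T]` is a branch of `T`. -/
def IsBranch (T : Set (List ℕ)) (f : ℕ → ℕ) : Prop := ∀ n, res f n ∈ T

/-- An almost disjoint family: infinite sets with pairwise finite intersections. -/
def IsADF (𝒜 : Set (Set ℕ)) : Prop :=
  (∀ A ∈ 𝒜, A.Infinite) ∧ ∀ A ∈ 𝒜, ∀ B ∈ 𝒜, A ≠ B → (A ∩ B).Finite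

/-- A maximal almost disjoint family. -/
def IsMAD (𝒜 : Set (Set ℕ)) : Prop :=
  IsADF 𝒜 ∧ ∀ X : Set ℕ, X.Infinite → ∃ A ∈ 𝒜, (X ∩ A).Infinite

/-- `X ∈ I(𝒜)`: the ideal generated by `𝒜` together with the finite sets. -/
def InIdeal (𝒜 : Set (Set ℕ)) (X : Set ℕ) : Prop :=
  ∃ F : Finset (Set ℕ), ↑F ⊆ 𝒜 ∧ (X \ ⋃ A ∈ F, A).Finite

/-- `X` is `I(𝒜)`-positive. -/
def Positive (𝒜 : Set (Set ℕ)) (X : Set ℕ) : Prop := ¬ InIdeal 𝒜 X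

/-- `𝒜` is `+`-Ramsey: every tree all of whose successor sets are `I(𝒜)`-positive
has a branch whose range is `I(𝒜)`-positive. -/
def PlusRamsey (𝒜 : Set (Set ℕ)) : Prop :=
  ∀ T : Set (List ℕ), [] ∈ T → IsTree T → (∀ s ∈ T, Positive 𝒜 (sucT T s)) →
    ∃ f : ℕ → ℕ, IsBranch T f ∧ Positive 𝒜 (Set.range f)

open Classical

/-- A prefix-monotone injective coding of finite sequences. -/
def code (l : List ℕ) : ℕ := l.foldl (fun a n => Nat.pair a n + 1) 0

lemma code_append (s : List ℕ) (n : ℕ) : code (s ++ [n]) = Nat.pair (code s) n + 1 := by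
  simp [code, List.foldl_append]

lemma code_lt (s : List ℕ) (n : ℕ) : code s < code (s ++ [n]) := by
  rw [code_append]; exact Nat.lt_succ_of_le (Nat.left_le_pair _ _)

lemma code_eq_zero (s : List ℕ) : code s = 0 ↔ s = [] := by
  induction s using List.reverseRecOn with
  | nil => simp [code]
  | append_singleton s n ih => rw [code_append]; simp

lemma code_injective : Function.Injective code := by
  intro a
  induction a using List.reverseRecOn with
  | nil => intro b h; exact ((code_eq_zero b).1 h.symm).symm
  | append_singleton s n ih =>
    intro b h
    induction b using List.reverseRecOn with
    | nil => exact absurd ((code_eq_zero _).1 h) (by simp)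
    | append_singleton t m _ =>
      rw [code_append, code_append] at h
      obtain ⟨h1, h2⟩ := Nat.pair_eq_pair.mp (Nat.succ_injective h)
      rw [ih h1, h2]

/-- The recursive choice: to each node `s` assign a member of `𝒜` avoiding all
previously chosen members, together with an infinite successor set inside it. -/
noncomputable def pick (𝒜 : Set (Set ℕ)) (T : Set (List ℕ)) (s : List ℕ) : Set ℕ × Set ℕ :=
  let P : Set ℕ := ⋃ t : {t : List ℕ // t ∈ T ∧ code t < code s}, (pick 𝒜 T t.1).1
  let X : Set ℕ := sucT T s \ P
  let A : Set ℕ := if h : ∃ A ∈ 𝒜, (X ∩ A).Infinite then h.choose else ∅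
  (A, X ∩ A)
termination_by code s
decreasing_by exact t.2.2

/-- Union of the sets chosen at nodes with smaller code. -/
noncomputable def prevU (𝒜 : Set (Set ℕ)) (T : Set (List ℕ)) (s : List ℕ) : Set ℕ :=
  ⋃ t : {t : List ℕ // t ∈ T ∧ code t < code s}, (pick 𝒜 T t.1).1

lemma pick_eq (𝒜 : Set (Set ℕ)) (T : Set (List ℕ)) (s : List ℕ) : pick 𝒜 T s =
    (if h : ∃ A ∈ 𝒜, ((sucT T s \ prevU 𝒜 T s) ∩ A).Infinite then h.choose else ∅,
     (sucT T s \ prevU 𝒜 T s) ∩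
       (if h : ∃ A ∈ 𝒜, ((sucT T s \ prevU 𝒜 T s) ∩ A).Infinite then h.choose else ∅)) := by
  rw [pick]; rfl

lemma pick_key (𝒜 : Set (Set ℕ)) (hmad : IsMAD 𝒜) (T : Set (List ℕ))
    (hpos : ∀ s ∈ T, Positive 𝒜 (sucT T s)) :
    ∀ s ∈ T, (pick 𝒜 T s).1 ∈ 𝒜 ∧
      (pick 𝒜 T s).2 = (sucT T s \ prevU 𝒜 T s) ∩ (pick 𝒜 T s).1 ∧
      (pick 𝒜 T s).2.Infinite := by
  have main : ∀ n : ℕ, ∀ s ∈ T, code s < n → (pick 𝒜 T s).1 ∈ 𝒜 ∧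
      (pick 𝒜 T s).2 = (sucT T s \ prevU 𝒜 T s) ∩ (pick 𝒜 T s).1 ∧
      (pick 𝒜 T s).2.Infinite := by
    intro n
    induction n with
    | zero => intro s _ h; omega
    | succ n ih =>
      intro s hs hlt
      rcases Nat.lt_or_ge (code s) n with h | h
      · exact ih s hs h
      have hE : {t : List ℕ | t ∈ T ∧ code t < code s}.Finite := by
        apply Set.Finite.subset ((Set.finite_Iio (code s)).preimage code_injective.injOn)
        intro t ht; exact ht.2
      have hXinf : (sucT T s \ prevU 𝒜 T s).Infinite := by
        by_contra hfin
        rw [Set.not_infinite] at hfin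
        apply hpos s hs
        refine ⟨(hE.image (fun t => (pick 𝒜 T t).1)).toFinset, ?_, ?_⟩
        · intro B hB
          simp only [Set.Finite.coe_toFinset, Set.mem_image, Set.mem_setOf_eq] at hB
          obtain ⟨t, ⟨ht, hlt'⟩, rfl⟩ := hB
          exact (ih t ht (by omega)).1
        · have hU : (⋃ A ∈ (hE.image (fun t => (pick 𝒜 T t).1)).toFinset, A)
              = prevU 𝒜 T s := by
            ext x
            simp only [Set.mem_iUnion, Set.Finite.mem_toFinset, Set.mem_image,
              Set.mem_setOf_eq, prevU]
            constructor
            · rintro ⟨B, ⟨t, ht, rfl⟩, hx⟩; exact ⟨⟨t, ht⟩, hx⟩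
            · rintro ⟨⟨t, ht⟩, hx⟩; exact ⟨_, ⟨t, ht, rfl⟩, hx⟩
          rw [hU]; exact hfin
      have hex : ∃ A ∈ 𝒜, ((sucT T s \ prevU 𝒜 T s) ∩ A).Infinite := hmad.2 _ hXinf
      refine ⟨?_, ?_, ?_⟩
      · rw [pick_eq]
        simp only [dif_pos hex]
        exact hex.choose_spec.1
      · rw [pick_eq]
      · rw [pick_eq]
        simp only [dif_pos hex]
        exact hex.choose_spec.2
  intro s hs
  exact main (code s + 1) s hs (Nat.lt_succ_self _)

lemma pick_X_subset (𝒜 : Set (Set ℕ)) (T : Set (List ℕ)) {s t : List ℕ}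
    (ht : t ∈ T) (hlt : code t < code s) : (pick 𝒜 T t).1 ⊆ prevU 𝒜 T s :=
  Set.subset_iUnion (fun u : {t : List ℕ // t ∈ T ∧ code t < code s} => (pick 𝒜 T u.1).1)
    ⟨t, ht, hlt⟩

lemma pick_spec (𝒜 : Set (Set ℕ)) (hmad : IsMAD 𝒜) (T : Set (List ℕ))
    (hpos : ∀ s ∈ T, Positive 𝒜 (sucT T s)) :
    ∀ s ∈ T, (pick 𝒜 T s).1 ∈ 𝒜 ∧ (pick 𝒜 T s).2.Infinite ∧
      (pick 𝒜 T s).2 ⊆ sucT T s ∧ (pick 𝒜 T s).2 ⊆ (pick 𝒜 T s).1 ∧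
      ∀ t ∈ T, code t < code s →
        (pick 𝒜 T s).1 ≠ (pick 𝒜 T t).1 ∧ (pick 𝒜 T s).2 ∩ (pick 𝒜 T t).2 = ∅ := by
  intro s hs
  obtain ⟨hA, hC, hCinf⟩ := pick_key 𝒜 hmad T hpos s hs
  have hCX : (pick 𝒜 T s).2 ⊆ sucT T s := by
    rw [hC]; exact fun x hx => hx.1.1
  have hCA : (pick 𝒜 T s).2 ⊆ (pick 𝒜 T s).1 := by
    rw [hC]; exact fun x hx => hx.2
  refine ⟨hA, hCinf, hCX, hCA, ?_⟩
  intro t ht hlt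
  obtain ⟨hAt, hCt, _⟩ := pick_key 𝒜 hmad T hpos t ht
  have hsub : (pick 𝒜 T t).1 ⊆ prevU 𝒜 T s := pick_X_subset 𝒜 T ht hlt
  have hdisj : (pick 𝒜 T s).2 ∩ (pick 𝒜 T t).1 = ∅ := by
    rw [hC]
    apply Set.eq_empty_iff_forall_notMem.mpr
    rintro x ⟨⟨⟨-, hxP⟩, -⟩, hxt⟩
    exact hxP (hsub hxt)
  constructor
  · intro heq
    have h1 : (pick 𝒜 T s).2 ⊆ (pick 𝒜 T t).1 := heq ▸ hCA
    have h2 : (pick 𝒜 T s).2 = ∅ := by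
      rw [← hdisj, Set.inter_eq_self_of_subset_left h1]
    exact hCinf.nonempty.ne_empty h2
  · apply Set.eq_empty_of_subset_empty
    rw [← hdisj]
    apply Set.inter_subset_inter_right
    rw [hCt]; exact fun x hx => hx.2

/-- Lemma: every `I(𝒜)`-positive-branching tree for a MAD family `𝒜` has a subtree
whose successor sets are infinite subsets of pairwise distinct members of `𝒜`,
pairwise disjoint. -/
theorem stmt3 (𝒜 : Set (Set ℕ)) (hmad : IsMAD 𝒜)
    (T : Set (List ℕ)) (hT : [] ∈ T) (htree : IsTree T)
    (hpos : ∀ s ∈ T, Positive 𝒜 (sucT T s)) :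
    ∃ (S : Set (List ℕ)) (A : List ℕ → Set ℕ),
      S ⊆ T ∧ [] ∈ S ∧ IsTree S ∧
      (∀ s ∈ S, A s ∈ 𝒜) ∧
      (∀ s ∈ S, ∀ t ∈ S, s ≠ t → A s ≠ A t) ∧
      (∀ s ∈ S, (sucT S s).Infinite ∧ sucT S s ⊆ A s) ∧
      (∀ s ∈ S, ∀ t ∈ S, s ≠ t → sucT S s ∩ sucT S t = ∅) := by
  set S : Set (List ℕ) := {s | ∀ t n, t ++ [n] <+: s → n ∈ (pick 𝒜 T t).2} with hSdef
  have hnilS : [] ∈ S := by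
    intro t n hpre
    rw [List.prefix_nil] at hpre
    exact absurd hpre (by simp)
  have hdown : ∀ (s : List ℕ) (n : ℕ), s ++ [n] ∈ S → s ∈ S := by
    intro s n h t m hpre
    exact h t m (hpre.trans (List.prefix_append s [n]))
  have hST : ∀ s ∈ S, s ∈ T := by
    intro s
    induction s using List.reverseRecOn with
    | nil => intro _; exact hT
    | append_singleton s n ih =>
      intro h
      have hsT : s ∈ T := ih (hdown s n h)
      have hn : n ∈ (pick 𝒜 T s).2 := h s n (List.prefix_refl _)
      exact (pick_spec 𝒜 hmad T hpos s hsT).2.2.1 hn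
  have htreeS : IsTree S := by
    intro s hs t hpre u m hpre'
    exact hs u m (hpre'.trans hpre)
  have hsucS : ∀ s ∈ S, sucT S s = (pick 𝒜 T s).2 := by
    intro s hs
    ext n
    simp only [sucT, Set.mem_setOf_eq]
    constructor
    · intro h; exact h s n (List.prefix_refl _)
    · intro hn t m hpre
      rcases List.prefix_concat_iff.mp hpre with heq | hpre'
      · obtain ⟨rfl, h2⟩ := List.append_inj' heq rfl
        obtain rfl : m = n := by simpa using h2
        exact hn
      · exact hs t m hpre'
  refine ⟨S, fun s => (pick 𝒜 T s).1, fun s hs => hST s hs, hnilS, htreeS, ?_, ?_, ?_, ?_⟩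
  · intro s hs; exact (pick_spec 𝒜 hmad T hpos s (hST s hs)).1
  · intro s hs t ht hne
    have hcs := hST s hs
    have hct := hST t ht
    have hne' : code s ≠ code t := fun h => hne (code_injective h)
    rcases Nat.lt_or_ge (code t) (code s) with h | h
    · exact ((pick_spec 𝒜 hmad T hpos s hcs).2.2.2.2 t hct h).1
    · have h' : code s < code t := by omega
      exact (((pick_spec 𝒜 hmad T hpos t hct).2.2.2.2 s hcs h').1).symm
  · intro s hs
    rw [hsucS s hs]
    exact ⟨(pick_spec 𝒜 hmad T hpos s (hST s hs)).2.1,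
      (pick_spec 𝒜 hmad T hpos s (hST s hs)).2.2.2.1⟩
  · intro s hs t ht hne
    have hcs := hST s hs
    have hct := hST t ht
    have hne' : code s ≠ code t := fun h => hne (code_injective h)
    rw [hsucS s hs, hsucS t ht]
    rcases Nat.lt_or_ge (code t) (code s) with h | h
    · exact ((pick_spec 𝒜 hmad T hpos s hcs).2.2.2.2 t hct h).2
    · have h' : code s < code t := by omega
      rw [Set.inter_comm]
      exact ((pick_spec 𝒜 hmad T hpos t hct).2.2.2.2 s hcs h').2
end

section
/- Every MAD family of size strictly less than the dominating number 𝔡 is +-Ramsey. -/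
open Cardinal in
/-- The dominating number `𝔡`. -/
noncomputable def dNum : Cardinal :=
  sInf {c | ∃ D : Set (ℕ → ℕ), Cardinal.mk ↥D = c ∧
    ∀ f : ℕ → ℕ, ∃ g ∈ D, {n | g n < f n}.Finite}

/-!
Assign injectively to every node `s` of `T` a set `A s ∈ 𝒜` meeting `suc_T(s)` in an infinite set;
this is possible because a positive set meets infinitely many members of a MAD family. For a
finite `F ⊆ 𝒜` and `M : ℕ`, the finitely many nodes bounded by `M` with `A s ∉ F` have `A s ∩ ⋃ F`
below some `φ F M`, by almost disjointness. There are only `|𝒜| < 𝔡` such `F`, so a single interval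
partition `m` of `ℕ` exceeds every `φ F` on infinitely many intervals. The branch that at level `n`
follows `A s` above `m n` then leaves `⋃ F` at the start of each such interval, so its range is
positive.
-/

open Cardinal Filter Function Set

/-- If only finitely many members of `𝒜` met `X` in an infinite set, then by maximality `X` minus
their union would be finite, i.e. `X ∈ I(𝒜)`. -/
lemma IsMAD.infinite_setOf_inter_infinite {𝒜 : Set (Set ℕ)} {X : Set ℕ} (hmad : IsMAD 𝒜)
    (hX : Positive 𝒜 X) : {A ∈ 𝒜 | (A ∩ X).Infinite}.Infinite := by
  intro hfin
  refine hX ⟨hfin.toFinset, fun A hA => (hfin.mem_toFinset.1 hA).1, ?_⟩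
  by_contra hinf
  obtain ⟨A, hA𝒜, hA⟩ := hmad.2 _ hinf
  obtain ⟨x, ⟨-, hxU⟩, hxA⟩ := hA.nonempty
  have hAX : (A ∩ X).Infinite := hA.mono fun y hy => ⟨hy.2, hy.1.1⟩
  exact hxU (mem_biUnion (hfin.mem_toFinset.2 ⟨hA𝒜, hAX⟩) hxA)

lemma IsADF.finite_inter_biUnion {𝒜 : Set (Set ℕ)} (had : IsADF 𝒜) {A : Set ℕ} (hA : A ∈ 𝒜)
    {F : Finset (Set ℕ)} (hF : ↑F ⊆ 𝒜) (hAF : A ∉ F) : (A ∩ ⋃ B ∈ F, B).Finite := by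
  rw [inter_iUnion₂]
  exact F.finite_toSet.biUnion fun B hB =>
    had.2 A hA B (hF hB) fun hAB => hAF (hAB ▸ hB)

/-- Hall's theorem, applied to finite subsets of sizes `e a + 1` for an injection `e : α → ℕ`. -/
lemma exists_injective_forall_mem {α β : Type*} [Countable α] {P : α → Set β}
    (hP : ∀ a, (P a).Infinite) : ∃ c : α → β, Injective c ∧ ∀ a, c a ∈ P a := by
  classical
  obtain ⟨e, he⟩ := exists_injective_nat α
  choose t ht using fun a => (hP a).exists_subset_card_eq (e a + 1)
  obtain ⟨c, hc, hct⟩ := (Finset.all_card_le_biUnion_card_iff_exists_injective t).1 fun s => by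
    rcases s.eq_empty_or_nonempty with rfl | hs
    · simp
    obtain ⟨a, ha, hmax⟩ := s.exists_max_image e hs
    calc s.card ≤ (Finset.range (e a + 1)).card :=
          Finset.card_le_card_of_injOn e
            (fun b hb => Finset.mem_range.2 (Nat.lt_succ_of_le (hmax b hb))) he.injOn
      _ = (t a).card := by rw [Finset.card_range, (ht a).2]
      _ ≤ (s.biUnion t).card := Finset.card_le_card (Finset.subset_biUnion_of_mem t ha)
  exact ⟨c, hc, fun a => (ht a).1 (hct a)⟩

lemma mk_finset_subset_le {α : Type*} {s : Set α} (hs : s.Infinite) :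
    #{F : Finset α // ↑F ⊆ s} ≤ #s := by
  classical
  have := hs.to_subtype
  calc #{F : Finset α // ↑F ⊆ s}
      ≤ #(Finset s) :=
        mk_le_of_surjective (f := fun G => ⟨G.map (Embedding.subtype _), by simp⟩)
          fun F => ⟨F.1.subtype (· ∈ s), Subtype.ext (Finset.subtype_map_of_mem F.2)⟩
    _ = #s := mk_finset_of_infinite s

lemma exists_forall_infinite_lt_of_mk_lt_dNum {ι : Type} (hι : #ι < dNum) (g : ι → ℕ → ℕ) :
    ∃ h : ℕ → ℕ, ∀ i, {n | g i n < h n}.Infinite := by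
  by_contra! hdom
  have hD : dNum ≤ #(range g) := csInf_le' ⟨range g, rfl, fun f => ?_⟩
  · exact hι.not_ge (hD.trans mk_range_le)
  obtain ⟨i, hi⟩ := hdom f
  exact ⟨g i, mem_range_self i, hi⟩

lemma StrictMono.exists_le_lt_succ {m : ℕ → ℕ} (hm : StrictMono m) {j₀ x : ℕ} (hx : m j₀ ≤ x) :
    ∃ j, j₀ ≤ j ∧ m j ≤ x ∧ x < m (j + 1) := by
  classical
  have hex : ∃ j, x < m (j + 1) := ⟨x, (hm.id_le (x + 1)).trans_lt' (Nat.lt_succ_self x)⟩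
  have hxj := Nat.find_spec hex
  have hjx : m (Nat.find hex) ≤ x := by
    rcases h : Nat.find hex with _ | j
    · exact (hm.monotone (Nat.zero_le j₀)).trans hx
    · exact not_lt.1 (Nat.find_min hex (h ▸ Nat.lt_succ_self j))
  exact ⟨Nat.find hex, Nat.lt_succ_iff.1 (hm.lt_iff_lt.1 (hx.trans_lt hxj)), hjx, hxj⟩

/-- Take `H` monotone with `H x > χ (χ x)` infinitely often, `χ` a monotone majorant of `g i`, and
`m (j + 1) > H (m j)`: if `x ∈ [m j, m (j + 1))` is such a point, either
`χ (m j) ≤ χ x < m (j + 1)`, or `χ (m (j + 1)) ≤ χ (χ x) < H (m (j + 1)) < m (j + 2)`. -/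
lemma exists_scale_of_mk_lt_dNum {ι : Type} (hι : #ι < dNum) (g : ι → ℕ → ℕ) (u : ℕ → ℕ) :
    ∃ m : ℕ → ℕ, (∀ j, u (m j) < m (j + 1)) ∧ ∀ i, ∃ᶠ j in atTop, g i (m j) < m (j + 1) := by
  let χ i := partialSups (g i)
  obtain ⟨h, hh⟩ := exists_forall_infinite_lt_of_mk_lt_dNum hι fun i x => χ i (χ i x)
  let H := partialSups h
  let m : ℕ → ℕ := fun j => Nat.rec 0 (fun _ mj => H mj + u mj + mj + 1) j
  have hm : ∀ j, m (j + 1) = H (m j) + u (m j) + m j + 1 := fun j => rfl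
  have hmono : StrictMono m := strictMono_nat_of_lt_succ fun j => by rw [hm]; omega
  refine ⟨m, fun j => by rw [hm]; omega, fun i => frequently_atTop.2 fun j₀ => ?_⟩
  obtain ⟨x, hx, hj₀x⟩ := (hh i).exists_gt (m j₀)
  obtain ⟨j, hj₀j, hjx, hxj⟩ := hmono.exists_le_lt_succ hj₀x.le
  by_cases hχx : χ i x < m (j + 1)
  · exact ⟨j, hj₀j, (le_partialSups (g i) (m j)).trans_lt (((χ i).mono hjx).trans_lt hχx)⟩
  · refine ⟨j + 1, by omega, ?_⟩
    calc g i (m (j + 1)) ≤ χ i (m (j + 1)) := le_partialSups (g i) _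
      _ ≤ χ i (χ i x) := (χ i).mono (not_lt.1 hχx)
      _ < h x := hx
      _ ≤ H x := le_partialSups h x
      _ ≤ H (m (j + 1)) := H.mono hxj.le
      _ < m (j + 1 + 1) := by rw [hm (j + 1)]; omega

lemma IsADF.exists_bound_inter_biUnion {α : Type*} {𝒜 : Set (Set ℕ)} (had : IsADF 𝒜)
    {A : α → Set ℕ} (hA : ∀ a, A a ∈ 𝒜) {F : Finset (Set ℕ)} (hF : ↑F ⊆ 𝒜) {N : Set α}
    (hN : N.Finite) : ∃ b, ∀ a ∈ N, A a ∉ F → ∀ x ∈ A a ∩ ⋃ B ∈ F, B, x ≤ b := by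
  have hfin : (⋃ a ∈ {a ∈ N | A a ∉ F}, A a ∩ ⋃ B ∈ F, B).Finite :=
    (hN.subset fun a ha => ha.1).biUnion fun a ha => had.finite_inter_biUnion (hA a) hF ha.2
  obtain ⟨b, hb⟩ := hfin.bddAbove
  exact ⟨b, fun a ha haF x hx => hb (mem_biUnion (x := a) ⟨ha, haF⟩ hx)⟩

lemma IsMAD.exists_injective_inter_sucT_infinite {𝒜 : Set (Set ℕ)} {T : Set (List ℕ)}
    (hmad : IsMAD 𝒜) (hroot : [] ∈ T) (hpos : ∀ s ∈ T, Positive 𝒜 (sucT T s)) :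
    ∃ A : List ℕ → Set ℕ, Injective A ∧ ∀ s, A s ∈ 𝒜 ∧ (s ∈ T → (A s ∩ sucT T s).Infinite) := by
  refine exists_injective_forall_mem (P := fun s => {A ∈ 𝒜 | s ∈ T → (A ∩ sucT T s).Infinite})
    fun s => ?_
  by_cases hs : s ∈ T
  · exact (hmad.infinite_setOf_inter_infinite (hpos s hs)).mono fun A hA => ⟨hA.1, fun _ => hA.2⟩
  · exact (hmad.infinite_setOf_inter_infinite (hpos [] hroot)).mono
      fun A hA => ⟨hA.1, fun h => (hs h).elim⟩

def boundedLists (M : ℕ) : Set (List ℕ) := {s | s.length ≤ M ∧ ∀ x ∈ s, x ≤ M}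

lemma finite_boundedLists (M : ℕ) : (boundedLists M).Finite := by
  refine ((List.finite_length_le (Fin (M + 1)) M).image (List.map Fin.val)).subset ?_
  rintro s ⟨hlen, hs⟩
  lift s to List (Fin (M + 1)) using fun x hx => Nat.lt_succ_of_le (hs x hx)
  exact ⟨s, by simpa using hlen, rfl⟩

lemma boundedLists_mono : Monotone boundedLists :=
  fun _ _ hMN _ hs => ⟨hs.1.trans hMN, fun x hx => (hs.2 x hx).trans hMN⟩

lemma append_singleton_mem_boundedLists {s : List ℕ} {M N x : ℕ} (hs : s ∈ boundedLists M)
    (hMN : M < N) (hx : x ≤ N) : s ++ [x] ∈ boundedLists N := by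
  refine ⟨by simp only [List.length_append, List.length_singleton]; linarith [hs.1], ?_⟩
  simp only [List.mem_append, List.mem_singleton]
  rintro y (hy | rfl)
  exacts [(hs.2 y hy).trans hMN.le, hx]

lemma exists_step_bound (W : List ℕ → Set ℕ) :
    ∃ u : ℕ → ℕ, ∀ M, M < u M ∧ ∀ s ∈ boundedLists M, sInf (W s ∩ Ioi M) ≤ u M := by
  have h M : ∃ b, M < b ∧ ∀ s ∈ boundedLists M, sInf (W s ∩ Ioi M) ≤ b := by
    obtain ⟨b, hb⟩ := ((finite_boundedLists M).image fun s => sInf (W s ∩ Ioi M)).bddAbove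
    exact ⟨max b M + 1, by omega, fun s hs => (hb (mem_image_of_mem _ hs)).trans (by omega)⟩
  choose u hu using h
  exact ⟨u, hu⟩

lemma res_succ (f : ℕ → ℕ) (n : ℕ) : res f (n + 1) = res f n ++ [f n] := by
  simp [res, List.range_succ]

lemma res_injective (f : ℕ → ℕ) : Injective (res f) :=
  fun a b h => by simpa [res] using congrArg List.length h

lemma exists_eq_apply_res (next : ℕ → List ℕ → ℕ) : ∃ f : ℕ → ℕ, ∀ n, f n = next n (res f n) := by
  let S : ℕ → List ℕ := fun n => Nat.rec [] (fun k s => s ++ [next k s]) n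
  refine ⟨fun n => next n (S n), fun n => congrArg (next n) ?_⟩
  induction n with
  | zero => rfl
  | succ n ih => rw [res_succ, ← ih]

lemma greedy_branch_spec {T : Set (List ℕ)} {W : List ℕ → Set ℕ} {u m f : ℕ → ℕ} (hroot : [] ∈ T)
    (hW : ∀ s ∈ T, (W s).Infinite ∧ W s ⊆ sucT T s)
    (hu : ∀ M, M < u M ∧ ∀ s ∈ boundedLists M, sInf (W s ∩ Ioi M) ≤ u M)
    (hm : ∀ j, u (m j) < m (j + 1)) (hf : ∀ n, f n = sInf (W (res f n) ∩ Ioi (m n))) (n : ℕ) :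
    res f n ∈ T ∧ res f n ∈ boundedLists (m n) ∧ f n ∈ W (res f n) ∩ Ioi (m n) ∧ f n ≤ u (m n) := by
  have hnext : ∀ n, res f n ∈ T → res f n ∈ boundedLists (m n) →
      f n ∈ W (res f n) ∩ Ioi (m n) ∧ f n ≤ u (m n) := fun n hT hb => by
    rw [hf n]
    exact ⟨Nat.sInf_mem ((hW _ hT).1.exists_gt (m n)), (hu (m n)).2 _ hb⟩
  suffices hinv : res f n ∈ T ∧ res f n ∈ boundedLists (m n) from
    ⟨hinv.1, hinv.2, hnext n hinv.1 hinv.2⟩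
  induction n with
  | zero => exact ⟨hroot, by simp [res, boundedLists]⟩
  | succ n ih =>
    obtain ⟨hmem, hle⟩ := hnext n ih.1 ih.2
    rw [res_succ]
    exact ⟨(hW _ ih.1).2 hmem.1, boundedLists_mono (hm n).le
      (append_singleton_mem_boundedLists ih.2 (hu (m n)).1 hle)⟩

/-- At a level `j` with `φ F (u (m j)) < m (j + 1)` the node `s = res f (j + 1)` lies in
`boundedLists (u (m j))`, so `f (j + 1) > m (j + 1)` avoids `A s ∩ ⋃ F`; for large `j` also
`A s ∉ F`, and `f (j + 1) ∈ A s` is then outside `⋃ F`. -/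
lemma exists_branch_positive_range {𝒜 : Set (Set ℕ)} {T : Set (List ℕ)} {A : List ℕ → Set ℕ}
    {u m : ℕ → ℕ} {φ : {F : Finset (Set ℕ) // ↑F ⊆ 𝒜} → ℕ → ℕ} (hroot : [] ∈ T)
    (hA : Injective A) (hAT : ∀ s ∈ T, (A s ∩ sucT T s).Infinite)
    (hu : ∀ M, M < u M ∧ ∀ s ∈ boundedLists M, sInf (A s ∩ sucT T s ∩ Ioi M) ≤ u M)
    (hφ : ∀ F M, ∀ s ∈ boundedLists M, A s ∉ F.1 → ∀ x ∈ A s ∩ ⋃ B ∈ F.1, B, x ≤ φ F M)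
    (hm : ∀ j, u (m j) < m (j + 1)) (hmφ : ∀ F, ∃ᶠ j in atTop, φ F (u (m j)) < m (j + 1)) :
    ∃ f, IsBranch T f ∧ Positive 𝒜 (range f) := by
  obtain ⟨f, hf⟩ := exists_eq_apply_res fun n s => sInf (A s ∩ sucT T s ∩ Ioi (m n))
  have hspec := greedy_branch_spec hroot (fun s hs => ⟨hAT s hs, inter_subset_right⟩) hu hm hf
  have hmono : StrictMono f := strictMono_nat_of_lt_succ fun n =>
    (hspec n).2.2.2.trans_lt ((hm n).trans (hspec (n + 1)).2.2.1.2)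
  refine ⟨f, fun n => (hspec n).1, ?_⟩
  rintro ⟨F, hF, hfin⟩
  have hcover : ∀ᶠ n in atTop, f n ∈ ⋃ B ∈ F, B := by
    rw [← Nat.cofinite_eq_atTop, eventually_cofinite]
    exact (hfin.preimage hmono.injective.injOn).subset fun n hn => ⟨mem_range_self n, hn⟩
  have hfresh : ∀ᶠ n in atTop, A (res f n) ∉ F := by
    rw [← Nat.cofinite_eq_atTop, eventually_cofinite]
    simp only [not_not]
    exact F.finite_toSet.preimage (hA.comp (res_injective f)).injOn
  obtain ⟨j, hφj, hcov, hfr⟩ := ((hmφ ⟨F, hF⟩).and_eventually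
    ((tendsto_add_atTop_nat 1).eventually (hcover.and hfresh))).exists
  have hbdd : res f (j + 1) ∈ boundedLists (u (m j)) := res_succ f j ▸
    append_singleton_mem_boundedLists (hspec j).2.1 (hu _).1 (hspec j).2.2.2
  have hle := hφ ⟨F, hF⟩ _ _ hbdd hfr (f (j + 1)) ⟨(hspec (j + 1)).2.2.1.1.1, hcov⟩
  have hgt := (hspec (j + 1)).2.2.1.2
  exact absurd (hφj.trans hgt) (not_lt.2 hle)

/-- Every MAD family of size less than `𝔡` is `+`-Ramsey. -/
theorem stmt4 (𝒜 : Set (Set ℕ)) (hmad : IsMAD 𝒜)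
    (hsize : Cardinal.mk ↥𝒜 < dNum) : PlusRamsey 𝒜 := by
  intro T hroot _ hpos
  obtain ⟨A, hAinj, hA⟩ := hmad.exists_injective_inter_sucT_infinite hroot hpos
  have h𝒜 : 𝒜.Infinite :=
    (infinite_range_of_injective hAinj).mono (range_subset_iff.2 fun s => (hA s).1)
  obtain ⟨u, hu⟩ := exists_step_bound fun s => A s ∩ sucT T s
  choose φ hφ using fun (F : {F : Finset (Set ℕ) // ↑F ⊆ 𝒜}) M =>
    hmad.1.exists_bound_inter_biUnion (fun s => (hA s).1) F.2 (finite_boundedLists M)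
  obtain ⟨m, hmu, hmφ⟩ := exists_scale_of_mk_lt_dNum ((mk_finset_subset_le h𝒜).trans_lt hsize)
    (fun F => φ F ∘ u) u
  exact exists_branch_positive_range hroot hAinj (fun s hs => (hA s).2 hs) hu hφ hmu hmφ
end

section
/- Let p be a Miller tree and S an infinite subset of ω. In the game G(p,S) where player I builds an increasing chain s_0 ⊊ s_1 ⊊ ... of splitting nodes of p with s_{i+1}(|s_i|) ∈ S and s_{i+1}(|s_i|) > r_i, and player II plays natural numbers r_i, player II has a winning strategy if and only if there is H : Split(p) → ω such that for every branch f ∈ [p], the set {n : f↾n ∈ Split(p) and f(n) ∈ S} is, except for finitely many elements, contained in {n : f↾n ∈ Split(p) and f(n) < H(f↾n)}. -/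
/-- A Miller (superperfect) tree: a nonempty tree of strictly increasing sequences in
which every node extends to an infinitely-splitting node. -/
def IsMiller (p : Set (List ℕ)) : Prop :=
  p.Nonempty ∧ IsTree p ∧ (∀ s ∈ p, List.Chain' (· < ·) s) ∧
    ∀ s ∈ p, ∃ t ∈ p, s <+: t ∧ (sucT p t).Infinite

/-- The (infinitely-)splitting nodes of `p`. -/
def SplitNodes (p : Set (List ℕ)) : Set (List ℕ) := {s | s ∈ p ∧ (sucT p s).Infinite}

/-- `Sp(p,f) = {f(n) : f↾n ∈ Split(p)}`. -/
def Sp (p : Set (List ℕ)) (f : ℕ → ℕ) : Set ℕ :=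
  {m | ∃ n, res f n ∈ SplitNodes p ∧ f n = m}

/-- `[p]_split = {Sp(p,f) : f ∈ [p]}`. -/
def splitSets (p : Set (List ℕ)) : Set (Set ℕ) := {X | ∃ f, IsBranch p f ∧ X = Sp p f}

/-- `play` is an infinite legal run of the game `G(p,S)` in which player I builds an
increasing chain of splitting nodes of `p` against the strategy `σ` of player II:
each new node takes a value in `S` exceeding II's last move at the first new
coordinate. -/
def LegalPlay (p : Set (List ℕ)) (S : Set ℕ) (σ : List (List ℕ) → ℕ)
    (play : ℕ → List ℕ) : Prop :=
  (∀ i, play i ∈ SplitNodes p) ∧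
  ∀ i, play i <+: play (i + 1) ∧ (play i).length < (play (i + 1)).length ∧
    (play (i + 1)).getD (play i).length 0 ∈ S ∧
    σ (List.ofFn (fun j : Fin (i + 1) => play j)) <
      (play (i + 1)).getD (play i).length 0

/-!
Player II's moves only need to bound I's next value from below. If II has a winning strategy
`σ`, let `H s` exceed every answer of `σ` to a history of I ending in `s`; such histories
are determined by the lengths of their earlier nodes, a subset of `range |s|`, so there are
finitely many. A branch with infinitely many `n` where `f↾n` splits and `S ∋ f n ≥ H (f↾n)`
would yield a legal infinite play of I against `σ`. Conversely, given `H`, let II answer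
`H` of I's last node; the union of an infinite legal play is a branch of `p` for which all
the lengths of I's moves lie in the exceptional set.
-/

def escapeSet (p : Set (List ℕ)) (S : Set ℕ) (H : List ℕ → ℕ) (f : ℕ → ℕ) : Set ℕ :=
  {n | res f n ∈ SplitNodes p ∧ f n ∈ S ∧ ¬ f n < H (res f n)}

lemma res_length (f : ℕ → ℕ) (n : ℕ) : (res f n).length = n := by simp [res]

lemma res_getD {f : ℕ → ℕ} {j n : ℕ} (h : j < n) : (res f n).getD j 0 = f j := by
  simp [res, h]

lemma res_take {f : ℕ → ℕ} {n m : ℕ} (h : n ≤ m) : (res f m).take n = res f n := by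
  simp [res, ← List.map_take, List.take_range, Nat.min_eq_left h]

lemma res_prefix {f : ℕ → ℕ} {n m : ℕ} (h : n ≤ m) : res f n <+: res f m := by
  rw [← res_take h]
  exact List.take_prefix _ _

lemma getD_eq_of_prefix {α : Type*} {a b : List α} (h : a <+: b) {j : ℕ} (hj : j < a.length)
    (d : α) : b.getD j d = a.getD j d := by
  obtain ⟨e, rfl⟩ := h
  exact List.getD_append _ _ _ _ hj

lemma ofFn_sublist_range_of_strictMono {nn : ℕ → ℕ} (hmono : StrictMono nn) (i : ℕ) :
    (List.ofFn fun j : Fin i => nn j).Sublist (List.range (nn i)) := by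
  have hsorted : (List.ofFn fun j : Fin i => nn j).Pairwise (· < ·) :=
    List.pairwise_ofFn.2 fun _ _ h => hmono h
  refine List.sublist_of_subperm_of_pairwise (r := (· < ·))
    (List.subperm_of_subset hsorted.nodup fun a ha => ?_) hsorted List.pairwise_lt_range
  obtain ⟨j, rfl⟩ := List.mem_ofFn.1 ha
  exact List.mem_range.2 (hmono j.isLt)

/-- A history of I ending in `s` is `ks.map s.take ++ [s]`, where `ks` lists the lengths of
the earlier moves; `boundOfStrategy σ s` exceeds every answer of `σ` to such a history. -/
def boundOfStrategy (σ : List (List ℕ) → ℕ) (s : List ℕ) : ℕ :=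
  ((List.range s.length).sublists.map fun ks => σ (ks.map s.take ++ [s])).sum + 1

lemma ofFn_res_eq {f nn : ℕ → ℕ} (hmono : StrictMono nn) (i : ℕ) :
    List.ofFn (fun j : Fin (i + 1) => res f (nn j)) =
      (List.ofFn fun j : Fin i => nn j).map (res f (nn i)).take ++ [res f (nn i)] := by
  rw [List.ofFn_succ', List.concat_eq_append, List.map_ofFn]
  congr 2
  funext j
  exact (res_take (hmono j.isLt).le).symm

lemma strategy_lt_boundOfStrategy (σ : List (List ℕ) → ℕ) (f : ℕ → ℕ) {nn : ℕ → ℕ}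
    (hmono : StrictMono nn) (i : ℕ) :
    σ (List.ofFn fun j : Fin (i + 1) => res f (nn j)) < boundOfStrategy σ (res f (nn i)) := by
  have hks : (List.ofFn fun j : Fin i => nn j) ∈ (List.range (res f (nn i)).length).sublists := by
    rw [List.mem_sublists, res_length]
    exact ofFn_sublist_range_of_strictMono hmono i
  rw [ofFn_res_eq hmono, boundOfStrategy, Nat.lt_succ_iff]
  exact List.le_sum_of_mem (List.mem_map.2 ⟨_, hks, rfl⟩)

lemma legalPlay_of_strictMono {p : Set (List ℕ)} {S : Set ℕ} {σ : List (List ℕ) → ℕ}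
    {f nn : ℕ → ℕ} (hmono : StrictMono nn)
    (hesc : ∀ i, nn i ∈ escapeSet p S (boundOfStrategy σ) f) :
    LegalPlay p S σ fun i => res f (nn i) := by
  refine ⟨fun i => (hesc i).1, fun i => ?_⟩
  have hlt : nn i < nn (i + 1) := hmono (Nat.lt_succ_self i)
  simp only [res_length, res_getD hlt]
  exact ⟨res_prefix hlt.le, hlt, (hesc i).2.1,
    (strategy_lt_boundOfStrategy σ f hmono i).trans_le (not_lt.1 (hesc i).2.2)⟩

lemma escapeSet_finite_of_winning {p : Set (List ℕ)} {S : Set ℕ} {σ : List (List ℕ) → ℕ}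
    (hσ : ∀ play, ¬ LegalPlay p S σ play) (f : ℕ → ℕ) :
    (escapeSet p S (boundOfStrategy σ) f).Finite := by
  by_contra hinf
  exact hσ _ (legalPlay_of_strictMono (Nat.nth_strictMono hinf) (Nat.nth_mem_of_infinite hinf))

section ChainLimit

/-- The union of a chain of finite sequences; when the lengths increase strictly,
`m < |c (m + 1)|`, so the default `0` is never read. -/
def limit (c : ℕ → List ℕ) (m : ℕ) : ℕ := (c (m + 1)).getD m 0

variable {c : ℕ → List ℕ} (hc : ∀ i, c i <+: c (i + 1))
  (hlen : StrictMono fun i => (c i).length)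

include hc in
lemma prefix_of_le {i j : ℕ} (hij : i ≤ j) : c i <+: c j := by
  induction j, hij using Nat.le_induction with
  | base => exact List.prefix_refl _
  | succ k _ ih => exact ih.trans (hc k)

include hc hlen in
lemma limit_eq_getD {j k : ℕ} (hj : j < (c k).length) : limit c j = (c k).getD j 0 := by
  have hj' : j < (c (j + 1)).length := Nat.lt_succ_self j |>.trans_le (hlen.id_le (j + 1))
  rcases le_total (j + 1) k with h | h
  · exact (getD_eq_of_prefix (prefix_of_le hc h) hj' 0).symm
  · exact getD_eq_of_prefix (prefix_of_le hc h) hj 0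

include hc hlen in
lemma res_limit (k : ℕ) : res (limit c) (c k).length = c k := by
  refine List.ext_getElem (res_length _ _) fun j h1 h2 => ?_
  rw [← List.getD_eq_getElem _ 0 h1, ← List.getD_eq_getElem _ 0 h2,
    res_getD (by simpa only [res_length] using h1), limit_eq_getD hc hlen h2]

include hc hlen in
lemma isBranch_limit {p : Set (List ℕ)} (hT : IsTree p) (hcp : ∀ i, c i ∈ p) :
    IsBranch p (limit c) := fun n =>
  hT _ (hcp n) _ (res_limit hc hlen n ▸ res_prefix (hlen.id_le n))

end ChainLimit

def strategyOfBound (H : List ℕ → ℕ) (L : List (List ℕ)) : ℕ := H (L.getLastD [])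

lemma getLastD_ofFn_succ (c : ℕ → List ℕ) (i : ℕ) :
    (List.ofFn fun j : Fin (i + 1) => c j).getLastD [] = c i := by
  rw [List.ofFn_succ', List.concat_eq_append, List.getLastD_concat]
  rfl

lemma escapeSet_infinite_of_legalPlay {p : Set (List ℕ)} {S : Set ℕ} {H : List ℕ → ℕ}
    {play : ℕ → List ℕ} (hplay : LegalPlay p S (strategyOfBound H) play) :
    (escapeSet p S H (limit play)).Infinite := by
  obtain ⟨hsplit, hstep⟩ := hplay
  have hc : ∀ i, play i <+: play (i + 1) := fun i => (hstep i).1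
  have hlen : StrictMono fun i => (play i).length :=
    strictMono_nat_of_lt_succ fun i => (hstep i).2.1
  refine Set.infinite_of_injective_forall_mem hlen.injective fun i => ?_
  obtain ⟨-, hlt, hS, hH⟩ := hstep i
  rw [strategyOfBound, getLastD_ofFn_succ] at hH
  have hval := limit_eq_getD hc hlen hlt
  refine ⟨?_, ?_, ?_⟩ <;> simp only [res_limit hc hlen, hval]
  exacts [hsplit i, hS, not_lt.2 hH.le]

lemma isBranch_limit_of_legalPlay {p : Set (List ℕ)} (hT : IsTree p) {S : Set ℕ}
    {σ : List (List ℕ) → ℕ} {play : ℕ → List ℕ} (hplay : LegalPlay p S σ play) :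
    IsBranch p (limit play) :=
  isBranch_limit (fun i => (hplay.2 i).1) (strictMono_nat_of_lt_succ fun i => (hplay.2 i).2.1)
    hT fun i => (hplay.1 i).1

theorem stmt8_general (p : Set (List ℕ)) (hp : IsMiller p) (S : Set ℕ) :
    (∃ σ : List (List ℕ) → ℕ, ∀ play : ℕ → List ℕ, ¬ LegalPlay p S σ play) ↔
    (∃ H : List ℕ → ℕ, ∀ f, IsBranch p f →
      {n | res f n ∈ SplitNodes p ∧ f n ∈ S ∧ ¬ f n < H (res f n)}.Finite) := by
  constructor
  · rintro ⟨σ, hσ⟩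
    exact ⟨boundOfStrategy σ, fun f _ => escapeSet_finite_of_winning hσ f⟩
  · rintro ⟨H, hH⟩
    exact ⟨strategyOfBound H, fun play hplay =>
      escapeSet_infinite_of_legalPlay hplay (hH _ (isBranch_limit_of_legalPlay hp.2.1 hplay))⟩

/-- Player II has a winning strategy in `G(p,S)` iff there is `H : Split(p) → ω` such
that for every branch `f ∈ [p]` the set `{n : f↾n ∈ Split(p), f(n) ∈ S}` is almost
contained in `{n : f↾n ∈ Split(p), f(n) < H(f↾n)}`. -/
theorem stmt8 (p : Set (List ℕ)) (hp : IsMiller p) (S : Set ℕ) (hS : S.Infinite) :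
    (∃ σ : List (List ℕ) → ℕ, ∀ play : ℕ → List ℕ, ¬ LegalPlay p S σ play) ↔
    (∃ H : List ℕ → ℕ, ∀ f, IsBranch p f →
      {n | res f n ∈ SplitNodes p ∧ f n ∈ S ∧ ¬ f n < H (res f n)}.Finite) :=
  stmt8_general p hp S
end

section
/- For every Miller tree p and every infinite S ⊆ ω there is a Miller subtree q ≤ p such that either [q]_split ⊆ [S]^ω or [q]_split ⊆ [ω∖S]^ω. -/
/-!
Call `t ∈ p` *`A`-splitting* if it has infinitely many successors in `A`. Either every node of
`p` extends to an `S`-splitting node, or some `s₀ ∈ p` has no `S`-splitting extension; then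
every splitting node above `s₀` has only finitely many successors in `S`, so every node of
`p↾s₀` (`subtreeAt p s₀`) extends to an `(ω ∖ S)`-splitting node.

It remains to thin out a tree in which every node extends to an `A`-splitting node: keep all
successors in `A` at `A`-splitting nodes, and at any other node only the successor towards a
shortest `A`-splitting extension. The splitting nodes of the pruned tree are then exactly its
`A`-splitting nodes, and they recur along every branch: past non-`A`-splitting nodes the length
of a shortest `A`-splitting extension stays constant, while the branch keeps growing.
-/

namespace MillerTree

theorem res_length (f : ℕ → ℕ) (n : ℕ) : (res f n).length = n := by simp [res]

theorem res_succ (f : ℕ → ℕ) (n : ℕ) : res f (n + 1) = res f n ++ [f n] := by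
  simp [res, List.range_succ]

theorem strictMono_of_isBranch {p : Set (List ℕ)} (hchain : ∀ s ∈ p, List.IsChain (· < ·) s)
    {f : ℕ → ℕ} (hf : IsBranch p f) : StrictMono f :=
  strictMono_nat_of_lt_succ fun n => by
    simpa [res] using (hchain _ (hf (n + 2))).getElem n (by simp [res_length])

theorem snoc_prefix_snoc_iff {α : Type*} {u s : List α} {m n : α} :
    u ++ [m] <+: s ++ [n] ↔ u ++ [m] <+: s ∨ u = s ∧ m = n := by
  rw [List.prefix_concat_iff, List.append_singleton_inj, or_comm]

def SplitsInto (p : Set (List ℕ)) (A : Set ℕ) (t : List ℕ) : Prop :=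
  t ∈ p ∧ (sucT p t ∩ A).Infinite

section Prune

variable {p : Set (List ℕ)} {A : Set ℕ} {s : List ℕ}

-- Junk value `sInf ∅ = 0` when no extension of `s` splits into `A`.
noncomputable def minSplitLength (p : Set (List ℕ)) (A : Set ℕ) (s : List ℕ) : ℕ :=
  sInf {n | ∃ t, SplitsInto p A t ∧ s <+: t ∧ t.length = n}

noncomputable def nextToSplit (p : Set (List ℕ)) (A : Set ℕ) (s : List ℕ) : ℕ :=
  Classical.epsilon fun n => ∃ t, SplitsInto p A t ∧ s ++ [n] <+: t ∧
    t.length = minSplitLength p A s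

def prune (p : Set (List ℕ)) (A : Set ℕ) : Set (List ℕ) :=
  {s | s ∈ p ∧ ∀ u n, u ++ [n] <+: s →
    (SplitsInto p A u → n ∈ A) ∧ (¬ SplitsInto p A u → n = nextToSplit p A u)}

theorem exists_minSplitLength (hs : ∃ t, SplitsInto p A t ∧ s <+: t) :
    ∃ t, SplitsInto p A t ∧ s <+: t ∧ t.length = minSplitLength p A s :=
  let ⟨t, ht, hst⟩ := hs
  Nat.sInf_mem (s := {n | ∃ t, SplitsInto p A t ∧ s <+: t ∧ t.length = n})
    ⟨t.length, t, ht, hst, rfl⟩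

theorem minSplitLength_le {t : List ℕ} (ht : SplitsInto p A t) (hst : s <+: t) :
    minSplitLength p A s ≤ t.length :=
  Nat.sInf_le ⟨t, ht, hst, rfl⟩

theorem length_lt_minSplitLength (hs : ∃ t, SplitsInto p A t ∧ s <+: t)
    (hns : ¬ SplitsInto p A s) : s.length < minSplitLength p A s := by
  obtain ⟨t, ht, hst, hlen⟩ := exists_minSplitLength hs
  refine hlen ▸ lt_of_le_of_ne hst.length_le fun h => hns ?_
  rwa [hst.eq_of_length h]

theorem exists_nextToSplit (hs : ∃ t, SplitsInto p A t ∧ s <+: t)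
    (hns : ¬ SplitsInto p A s) :
    ∃ t, SplitsInto p A t ∧ s ++ [nextToSplit p A s] <+: t ∧
      t.length = minSplitLength p A s := by
  refine Classical.epsilon_spec (p := fun n => ∃ t, SplitsInto p A t ∧ s ++ [n] <+: t ∧
    t.length = minSplitLength p A s) ?_
  obtain ⟨t, ht, ⟨r, rfl⟩, hlen⟩ := exists_minSplitLength hs
  obtain _ | ⟨n, r⟩ := r
  · simp only [List.append_nil] at ht; exact absurd ht hns
  · exact ⟨n, _, ht, ⟨r, by simp⟩, hlen⟩

theorem minSplitLength_snoc_nextToSplit (hs : ∃ t, SplitsInto p A t ∧ s <+: t)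
    (hns : ¬ SplitsInto p A s) :
    minSplitLength p A (s ++ [nextToSplit p A s]) = minSplitLength p A s := by
  obtain ⟨t, ht, hst, hlen⟩ := exists_nextToSplit hs hns
  refine le_antisymm (hlen ▸ minSplitLength_le ht hst) ?_
  obtain ⟨t', ht', hst', hlen'⟩ := exists_minSplitLength ⟨t, ht, hst⟩
  exact hlen' ▸ minSplitLength_le ht' ((List.prefix_append _ _).trans hst')

theorem snoc_mem_prune_iff (htree : IsTree p) {n : ℕ} :
    s ++ [n] ∈ prune p A ↔ s ∈ prune p A ∧ s ++ [n] ∈ p ∧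
      (SplitsInto p A s → n ∈ A) ∧ (¬ SplitsInto p A s → n = nextToSplit p A s) := by
  constructor
  · rintro ⟨hp, h⟩
    exact ⟨⟨htree _ hp s (List.prefix_append _ _),
      fun u m hu => h u m (hu.trans (List.prefix_append _ _))⟩, hp, h s n (List.prefix_refl _)⟩
  · rintro ⟨⟨-, h⟩, hp, hA, hnext⟩
    refine ⟨hp, fun u m hu => ?_⟩
    rcases snoc_prefix_snoc_iff.mp hu with hu | ⟨rfl, rfl⟩
    · exact h u m hu
    · exact ⟨hA, hnext⟩

theorem isTree_prune (htree : IsTree p) : IsTree (prune p A) :=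
  fun s hs t hts => ⟨htree s hs.1 t hts, fun u n hu => hs.2 u n (hu.trans hts)⟩

theorem prune_subset : prune p A ⊆ p := fun _ hs => hs.1

theorem nil_mem_prune (hnil : [] ∈ p) : [] ∈ prune p A :=
  ⟨hnil, fun u n h => by simp at h⟩

theorem sucT_prune_of_splitsInto (htree : IsTree p) (hs : s ∈ prune p A)
    (hsplit : SplitsInto p A s) : sucT (prune p A) s = sucT p s ∩ A := by
  ext n
  exact ⟨fun h => ⟨((snoc_mem_prune_iff htree).mp h).2.1,
      ((snoc_mem_prune_iff htree).mp h).2.2.1 hsplit⟩,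
    fun h => (snoc_mem_prune_iff htree).mpr ⟨hs, h.1, fun _ => h.2, (absurd hsplit ·)⟩⟩

theorem sucT_prune_subset_of_not_splitsInto (htree : IsTree p) (hns : ¬ SplitsInto p A s) :
    sucT (prune p A) s ⊆ {nextToSplit p A s} :=
  fun _ hn => ((snoc_mem_prune_iff htree).mp hn).2.2.2 hns

theorem mem_splitNodes_prune_iff (htree : IsTree p) :
    s ∈ SplitNodes (prune p A) ↔ s ∈ prune p A ∧ SplitsInto p A s := by
  refine ⟨fun ⟨hs, hinf⟩ => ⟨hs, ?_⟩, fun ⟨hs, hsplit⟩ => ⟨hs, ?_⟩⟩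
  · by_contra hns
    exact hinf ((Set.finite_singleton _).subset (sucT_prune_subset_of_not_splitsInto htree hns))
  · rw [sucT_prune_of_splitsInto htree hs hsplit]
    exact hsplit.2

theorem snoc_nextToSplit_mem_prune (htree : IsTree p) (hs : s ∈ prune p A)
    (hext : ∃ t, SplitsInto p A t ∧ s <+: t) (hns : ¬ SplitsInto p A s) :
    s ++ [nextToSplit p A s] ∈ prune p A := by
  obtain ⟨t, ht, hst, -⟩ := exists_nextToSplit hext hns
  exact (snoc_mem_prune_iff htree).mpr ⟨hs, htree t ht.1 _ hst, (absurd · hns), fun _ => rfl⟩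

theorem exists_splitsInto_of_mem_prune (htree : IsTree p)
    (H : ∀ s ∈ p, ∃ t, SplitsInto p A t ∧ s <+: t) {s : List ℕ} (hs : s ∈ prune p A) :
    ∃ t ∈ prune p A, s <+: t ∧ SplitsInto p A t := by
  by_cases hsplit : SplitsInto p A s
  · exact ⟨s, hs, List.prefix_refl s, hsplit⟩
  have hext := H s hs.1
  obtain ⟨t, ht, hst, htsplit⟩ :=
    exists_splitsInto_of_mem_prune htree H (snoc_nextToSplit_mem_prune htree hs hext hsplit)
  exact ⟨t, ht, (List.prefix_append _ _).trans hst, htsplit⟩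
termination_by minSplitLength p A s - s.length
decreasing_by
  rw [minSplitLength_snoc_nextToSplit hext hsplit, List.length_append, List.length_singleton]
  have := length_lt_minSplitLength hext hsplit
  omega

theorem isMiller_prune (htree : IsTree p) (hnil : [] ∈ p)
    (hchain : ∀ s ∈ p, List.IsChain (· < ·) s) (H : ∀ s ∈ p, ∃ t, SplitsInto p A t ∧ s <+: t) :
    IsMiller (prune p A) := by
  refine ⟨⟨[], nil_mem_prune hnil⟩, isTree_prune htree, fun s hs => hchain s hs.1, ?_⟩
  intro s hs
  obtain ⟨t, ht, hst, hsplit⟩ := exists_splitsInto_of_mem_prune htree H hs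
  exact ⟨t, ht, hst, ((mem_splitNodes_prune_iff htree).mpr ⟨ht, hsplit⟩).2⟩

theorem infinite_setOf_splitsInto_res (htree : IsTree p)
    (H : ∀ s ∈ p, ∃ t, SplitsInto p A t ∧ s <+: t) {f : ℕ → ℕ} (hf : IsBranch (prune p A) f) :
    {n | SplitsInto p A (res f n)}.Infinite := by
  refine Set.infinite_of_forall_exists_gt fun N => ?_
  by_contra! hN
  have hns : ∀ k, ¬ SplitsInto p A (res f (N + 1 + k)) := fun k h => by
    have := hN _ h
    omega
  have hconst : ∀ k, minSplitLength p A (res f (N + 1 + k)) =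
      minSplitLength p A (res f (N + 1)) := by
    intro k
    induction k with
    | zero => rfl
    | succ k ih =>
      have hnext : f (N + 1 + k) = nextToSplit p A (res f (N + 1 + k)) :=
        ((snoc_mem_prune_iff htree).mp (res_succ f _ ▸ hf _)).2.2.2 (hns k)
      rw [← ih, ← add_assoc, res_succ, hnext,
        minSplitLength_snoc_nextToSplit (H _ (hf _).1) (hns k)]
  set L := minSplitLength p A (res f (N + 1))
  have := length_lt_minSplitLength (H _ (hf (N + 1 + L)).1) (hns L)
  rw [res_length, hconst] at this
  omega

theorem splitSets_prune (htree : IsTree p) (H : ∀ s ∈ p, ∃ t, SplitsInto p A t ∧ s <+: t)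
    (hchain : ∀ s ∈ p, List.IsChain (· < ·) s) :
    ∀ X ∈ splitSets (prune p A), X.Infinite ∧ X ⊆ A := by
  rintro _ ⟨f, hf, rfl⟩
  have hSp : Sp (prune p A) f = f '' {n | SplitsInto p A (res f n)} := by
    ext m
    simp only [Sp, mem_splitNodes_prune_iff htree, hf _, true_and]
    exact Iff.rfl
  rw [hSp]
  refine ⟨(infinite_setOf_splitsInto_res htree H hf).image
    (strictMono_of_isBranch hchain fun n => (hf n).1).injective.injOn, ?_⟩
  rintro _ ⟨n, hn, rfl⟩
  exact ((snoc_mem_prune_iff htree).mp (res_succ f n ▸ hf (n + 1))).2.2.1 hn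

theorem exists_isMiller_subset_splitSets_subset (htree : IsTree p) (hnil : [] ∈ p)
    (hchain : ∀ s ∈ p, List.IsChain (· < ·) s) (H : ∀ s ∈ p, ∃ t, SplitsInto p A t ∧ s <+: t) :
    ∃ q, IsMiller q ∧ q ⊆ p ∧ ∀ X ∈ splitSets q, X.Infinite ∧ X ⊆ A :=
  ⟨prune p A, isMiller_prune htree hnil hchain H, prune_subset, splitSets_prune htree H hchain⟩

end Prune

section SubtreeAt

variable {p : Set (List ℕ)} {s₀ t : List ℕ}

def subtreeAt (p : Set (List ℕ)) (s₀ : List ℕ) : Set (List ℕ) :=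
  {s | s ∈ p ∧ (s <+: s₀ ∨ s₀ <+: s)}

theorem isTree_subtreeAt (htree : IsTree p) : IsTree (subtreeAt p s₀) := by
  rintro s ⟨hs, hcomp⟩ u hus
  refine ⟨htree s hs u hus, ?_⟩
  rcases hcomp with h | h
  · exact Or.inl (hus.trans h)
  · exact List.prefix_or_prefix_of_prefix hus h

theorem nil_mem_subtreeAt (hnil : [] ∈ p) : [] ∈ subtreeAt p s₀ :=
  ⟨hnil, Or.inl List.nil_prefix⟩

theorem subtreeAt_subset : subtreeAt p s₀ ⊆ p := fun _ hs => hs.1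

theorem sucT_subtreeAt (h : s₀ <+: t) : sucT (subtreeAt p s₀) t = sucT p t := by
  ext n
  exact ⟨fun hn => hn.1, fun hn => ⟨hn, Or.inr (h.trans (List.prefix_append _ _))⟩⟩

theorem splitsInto_compl_subtreeAt {S : Set ℕ} (hp : IsMiller p) (hs₀ : s₀ ∈ p)
    (hbad : ∀ t, SplitsInto p S t → ¬ s₀ <+: t) :
    ∀ s ∈ subtreeAt p s₀, ∃ t, SplitsInto (subtreeAt p s₀) (Set.univ \ S) t ∧ s <+: t := by
  rintro s ⟨hs, hcomp⟩
  obtain ⟨u, hu, hsu, hs₀u⟩ : ∃ u ∈ p, s <+: u ∧ s₀ <+: u :=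
    hcomp.elim (fun h => ⟨s₀, hs₀, h, List.prefix_refl _⟩)
      (fun h => ⟨s, hs, List.prefix_refl _, h⟩)
  obtain ⟨t, ht, hut, hinf⟩ := hp.2.2.2 u hu
  have hs₀t := hs₀u.trans hut
  have hfin : (sucT p t ∩ S).Finite := Set.not_infinite.mp fun h => hbad t ⟨ht, h⟩ hs₀t
  refine ⟨t, ⟨⟨ht, Or.inr hs₀t⟩, ?_⟩, hsu.trans hut⟩
  rw [sucT_subtreeAt hs₀t]
  exact (hinf.sdiff hfin).mono fun n hn => ⟨hn.1, trivial, fun h => hn.2 ⟨hn.1, h⟩⟩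

end SubtreeAt

end MillerTree

open MillerTree in
theorem stmt10_general (p : Set (List ℕ)) (hp : IsMiller p) (S : Set ℕ) :
    ∃ q, IsMiller q ∧ q ⊆ p ∧
      ((∀ X ∈ splitSets q, X.Infinite ∧ X ⊆ S) ∨
       (∀ X ∈ splitSets q, X.Infinite ∧ X ⊆ Set.univ \ S)) := by
  obtain ⟨⟨s, hs⟩, htree, hchain, -⟩ := id hp
  have hnil : [] ∈ p := htree s hs [] List.nil_prefix
  by_cases hS : ∀ s ∈ p, ∃ t, SplitsInto p S t ∧ s <+: t
  · obtain ⟨q, hq, hqp, hX⟩ := exists_isMiller_subset_splitSets_subset htree hnil hchain hS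
    exact ⟨q, hq, hqp, Or.inl hX⟩
  · push Not at hS
    obtain ⟨s₀, hs₀, hbad⟩ := hS
    obtain ⟨q, hq, hqp, hX⟩ := exists_isMiller_subset_splitSets_subset
      (isTree_subtreeAt htree) (nil_mem_subtreeAt hnil) (fun s hs => hchain s hs.1)
      (splitsInto_compl_subtreeAt hp hs₀ hbad)
    exact ⟨q, hq, hqp.trans subtreeAt_subset, Or.inr hX⟩

/-- For every Miller tree `p` and infinite `S ⊆ ω` there is a Miller subtree `q ≤ p`
with `[q]_split ⊆ [S]^ω` or `[q]_split ⊆ [ω∖S]^ω`. -/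
theorem stmt10 (p : Set (List ℕ)) (hp : IsMiller p) (S : Set ℕ) (hS : S.Infinite) :
    ∃ q, IsMiller q ∧ q ⊆ p ∧
      ((∀ X ∈ splitSets q, X.Infinite ∧ X ⊆ S) ∨
       (∀ X ∈ splitSets q, X.Infinite ∧ X ⊆ Set.univ \ S)) :=
  stmt10_general p hp S
end

section
/- If 𝒮 is an (ω,ω)-splitting family, 𝒜 an almost disjoint family, and X an I(𝒜)-positive subset of ω, then there exist S ∈ 𝒮 such that both X ∩ S and X ∖ S are I(𝒜)-positive. -/
/-- `𝒮` is an `(ω,ω)`-splitting family. -/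
def IsOmOmSplitting (𝒮 : Set (Set ℕ)) : Prop :=
  ∀ X : ℕ → Set ℕ, (∀ n, (X n).Infinite) →
    ∃ S ∈ 𝒮, {n | (X n ∩ S).Infinite}.Infinite ∧ {n | (X n \ S).Infinite}.Infinite

lemma inIdeal_mono {𝒜 : Set (Set ℕ)} {Y Z : Set ℕ} (h : Y ⊆ Z) (hZ : InIdeal 𝒜 Z) :
    InIdeal 𝒜 Y := by
  obtain ⟨F, hF, hfin⟩ := hZ
  exact ⟨F, hF, hfin.subset fun x hx => ⟨h hx.1, hx.2⟩⟩

lemma positive_mono {𝒜 : Set (Set ℕ)} {Y Z : Set ℕ} (h : Y ⊆ Z) (hY : Positive 𝒜 Y) :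
    Positive 𝒜 Z := fun hZ => hY (inIdeal_mono h hZ)

lemma positive_infinite {𝒜 : Set (Set ℕ)} {X : Set ℕ} (h : Positive 𝒜 X) : X.Infinite := by
  by_contra hfin
  rw [Set.not_infinite] at hfin
  exact h ⟨∅, by simp, by simpa using hfin⟩

/-- If `Y` is infinite and meets every member of `𝒜` finitely, then `Y` is positive. -/
lemma posA {𝒜 : Set (Set ℕ)} {Y : Set ℕ} (hinf : Y.Infinite)
    (h : ∀ A ∈ 𝒜, (Y ∩ A).Finite) : Positive 𝒜 Y := by
  rintro ⟨F, hF, hfin⟩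
  apply hinf
  have hsub : Y ⊆ (Y \ ⋃ A ∈ F, A) ∪ ⋃ A ∈ F, (Y ∩ A) := by
    intro x hx
    by_cases hxU : x ∈ ⋃ A ∈ F, (A : Set ℕ)
    · right
      simp only [Set.mem_iUnion] at hxU ⊢
      obtain ⟨A, hA, hxA⟩ := hxU
      exact ⟨A, hA, hx, hxA⟩
    · exact Or.inl ⟨hx, hxU⟩
  exact (hfin.union (Set.Finite.biUnion F.finite_toSet
    fun A hA => h A (hF hA))).subset hsub

/-- If `Y` meets infinitely many distinct members of `𝒜` infinitely, then `Y` is positive. -/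
lemma posB {𝒜 : Set (Set ℕ)} (h𝒜 : IsADF 𝒜) {Y : Set ℕ} (e : ℕ → Set ℕ)
    (he : Function.Injective e) (hmem : ∀ n, e n ∈ 𝒜)
    (hinf : {n | (Y ∩ e n).Infinite}.Infinite) : Positive 𝒜 Y := by
  rintro ⟨F, hF, hfin⟩
  have hpre : {n | e n ∈ F}.Finite := by
    have : {n | e n ∈ F} ⊆ e ⁻¹' (↑F : Set (Set ℕ)) := fun n hn => by simpa using hn
    exact (Set.Finite.preimage (Set.injOn_of_injective he) F.finite_toSet).subset this
  obtain ⟨n, hn1, hn2⟩ := (hinf.diff hpre).nonempty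
  have hYn : (Y ∩ e n).Infinite := hn1
  apply hYn
  have hsub : Y ∩ e n ⊆ (Y \ ⋃ A ∈ F, A) ∪ ⋃ A ∈ F, (e n ∩ A) := by
    rintro x ⟨hxY, hxe⟩
    by_cases hxU : x ∈ ⋃ A ∈ F, (A : Set ℕ)
    · right
      simp only [Set.mem_iUnion] at hxU ⊢
      obtain ⟨A, hA, hxA⟩ := hxU
      exact ⟨A, hA, hxe, hxA⟩
    · exact Or.inl ⟨hxY, hxU⟩
  refine (hfin.union (Set.Finite.biUnion F.finite_toSet fun A hA => ?_)).subset hsub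
  exact h𝒜.2 (e n) (hmem n) A (hF hA) (fun hEq => hn2 (by simpa [hEq] using hA))

/-- (Raghavan–Steprāns) If `𝒮` is `(ω,ω)`-splitting, `𝒜` is almost disjoint and `X` is
`I(𝒜)`-positive, then some `S ∈ 𝒮` splits `X` into two `I(𝒜)`-positive pieces. -/
theorem stmt18 (𝒮 : Set (Set ℕ)) (h𝒮 : IsOmOmSplitting 𝒮)
    (𝒜 : Set (Set ℕ)) (h𝒜 : IsADF 𝒜) (X : Set ℕ) (hX : Positive 𝒜 X) :
    ∃ S ∈ 𝒮, Positive 𝒜 (X ∩ S) ∧ Positive 𝒜 (X \ S) := by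
  classical
  by_cases hT : {A | A ∈ 𝒜 ∧ (X ∩ A).Infinite}.Infinite
  · -- infinitely many members of 𝒜 meet X infinitely
    let e : ℕ ↪ {A | A ∈ 𝒜 ∧ (X ∩ A).Infinite} := hT.natEmbedding
    have hinj : Function.Injective (fun n => ((e n : {A | A ∈ 𝒜 ∧ (X ∩ A).Infinite}) : Set ℕ)) :=
      fun a b hab => e.injective (Subtype.ext hab)
    obtain ⟨S, hS, h1, h2⟩ := h𝒮 (fun n => X ∩ (e n : Set ℕ)) (fun n => (e n).2.2)
    refine ⟨S, hS, ?_, ?_⟩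
    · apply posB h𝒜 _ hinj (fun n => (e n).2.1)
      have : {n | ((X ∩ S) ∩ (e n : Set ℕ)).Infinite}
          = {n | ((X ∩ (e n : Set ℕ)) ∩ S).Infinite} := by
        ext n; rw [Set.mem_setOf_eq, Set.mem_setOf_eq, Set.inter_right_comm]
      rw [this]; exact h1
    · apply posB h𝒜 _ hinj (fun n => (e n).2.1)
      have : {n | ((X \ S) ∩ (e n : Set ℕ)).Infinite}
          = {n | ((X ∩ (e n : Set ℕ)) \ S).Infinite} := by
        ext n
        have : (X \ S) ∩ (e n : Set ℕ) = (X ∩ (e n : Set ℕ)) \ S := by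
          ext x; simp only [Set.mem_inter_iff, Set.mem_diff]; tauto
        rw [Set.mem_setOf_eq, Set.mem_setOf_eq, this]
      rw [this]; exact h2
  · -- only finitely many members of 𝒜 meet X infinitely
    rw [Set.not_infinite] at hT
    set T : Set (Set ℕ) := {A | A ∈ 𝒜 ∧ (X ∩ A).Infinite} with hTdef
    set X' : Set ℕ := X \ ⋃ A ∈ hT.toFinset, A with hX'def
    have hX'pos : Positive 𝒜 X' := by
      rintro ⟨G, hG, hGfin⟩
      apply hX
      refine ⟨hT.toFinset ∪ G, ?_, ?_⟩
      · intro A hA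
        simp only [Finset.coe_union, Set.mem_union, Finset.mem_coe, Set.Finite.mem_toFinset] at hA
        rcases hA with hA | hA
        · exact hA.1
        · exact hG hA
      · refine hGfin.subset ?_
        intro x hx
        simp only [Set.mem_diff, Set.mem_iUnion, Finset.mem_union] at hx
        push_neg at hx
        obtain ⟨hxX, hxn⟩ := hx
        constructor
        · exact ⟨hxX, by simp only [Set.mem_iUnion]; push_neg; exact fun A hA => hxn A (Or.inl hA)⟩
        · simp only [Set.mem_iUnion]; push_neg; exact fun A hA => hxn A (Or.inr hA)
    have hX'inf : X'.Infinite := positive_infinite hX'pos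
    have hX'fin : ∀ A ∈ 𝒜, (X' ∩ A).Finite := by
      intro A hA
      by_cases hAT : A ∈ T
      · have : X' ∩ A = ∅ := by
          ext x
          simp only [Set.mem_inter_iff, Set.mem_empty_iff_false, iff_false, not_and]
          rintro ⟨_, hxn⟩ hxA
          exact hxn (Set.mem_biUnion (hT.mem_toFinset.mpr hAT) hxA)
        rw [this]; exact Set.finite_empty
      · have hXA : (X ∩ A).Finite := by
          by_contra hinf
          exact hAT ⟨hA, hinf⟩
        exact hXA.subset fun x hx => ⟨hx.1.1, hx.2⟩
    obtain ⟨S, hS, h1, h2⟩ := h𝒮 (fun _ => X') (fun _ => hX'inf)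
    obtain ⟨n1, hn1⟩ := h1.nonempty
    obtain ⟨n2, hn2⟩ := h2.nonempty
    refine ⟨S, hS, ?_, ?_⟩
    · refine positive_mono (show X' ∩ S ⊆ X ∩ S from fun x hx => ⟨hx.1.1, hx.2⟩) ?_
      exact posA hn1 fun A hA => (hX'fin A hA).subset fun x hx => ⟨hx.1.1, hx.2⟩
    · refine positive_mono (show X' \ S ⊆ X \ S from fun x hx => ⟨hx.1.1, hx.2⟩) ?_
      exact posA hn2 fun A hA => (hX'fin A hA).subset fun x hx => ⟨hx.1.1, hx.2⟩
end
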